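/- arXiv:2404.05856 — 6 statements merged into one kernel-verified Lean document; each statement's English description precedes it below -/
import Mathlib

section
/- For all positive integers r and k, if G is a graph and X is the set of vertices of G with degree at most rk - 1, then there exists an r-coloring of all edges of G incident with X such that every vertex in X is incident with at most k edges of each color. -/
/-!
Let `X` be the set of vertices of degree less than `r * k`. Delete the edges with no end in `X`,
and detach each edge from `X` to its complement from its outer end, which gets a private copy of
degree one.
The resulting graph has maximum degree less than `r * k`, so by Vizing's theorem it has a proper
edge coloring with the `r * k` colors `Fin r × Fin k`. Color each edge of `G` by the first
coordinate: the edges at a vertex of `X` carry distinct colors, so at most `k` of them share a first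
coordinate.

Vizing's theorem is proved by the classical argument: color all edges but one, `s(x, y)`, grow a fan
of spokes at `x` starting with `s(x, y)`, and finish either by rotating the fan or, after one Kempe
change, by rotating the fan or one of its prefixes.
-/

open SimpleGraph Finset

/-- `H` has a copy in `G`: an injective graph homomorphism from `H` to `G`. -/
def HasCopy {W V : Type*} (H : SimpleGraph W) (G : SimpleGraph V) : Prop :=
  ∃ f : H →g G, Function.Injective f

/-- Under the `r`-edge-coloring `c`, some color class of `G` contains a copy of `H`. -/
def HasMonoCopy {W V : Type*} (H : SimpleGraph W) (G : SimpleGraph V)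
    {r : ℕ} (c : Sym2 V → Fin r) : Prop :=
  ∃ i : Fin r, HasCopy H (SimpleGraph.fromRel fun u v => G.Adj u v ∧ c s(u, v) = i)

/-- Degree of a vertex, as the natural cardinality of its neighbor set. -/
noncomputable def deg {V : Type*} (G : SimpleGraph V) (v : V) : ℕ := (G.neighborSet v).ncard

theorem Sym2.mk_ne_mk_of_ne_of_ne {V : Type*} {v u x y : V} (hv : v ≠ x) (hu : u ≠ x) :
    s(v, u) ≠ s(x, y) := by
  rw [Ne, Sym2.eq_iff]
  tauto

namespace SimpleGraph

section ProperEdgeColoring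

variable {V α : Type*}

def IsProperEdgeColoring (G : SimpleGraph V) (c : Sym2 V → α) : Prop :=
  ∀ ⦃v u w⦄, G.Adj v u → G.Adj v w → c s(v, u) = c s(v, w) → u = w

theorem IsProperEdgeColoring.mono {G H : SimpleGraph V} {c : Sym2 V → α}
    (hc : G.IsProperEdgeColoring c) (hHG : H ≤ G) : H.IsProperEdgeColoring c :=
  fun _ _ _ hu hw => hc (hHG hu) (hHG hw)

theorem deleteEdges_adj_of_ne {G : SimpleGraph V} {v u x y : V} (h : G.Adj v u)
    (hne : s(v, u) ≠ s(x, y)) : (G.deleteEdges {s(x, y)}).Adj v u :=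
  deleteEdges_adj.2 ⟨h, hne⟩

theorem IsProperEdgeColoring.update [DecidableEq V] {G : SimpleGraph V} {c : Sym2 V → α}
    {x z : V} {γ : α} (hc : (G.deleteEdges {s(x, z)}).IsProperEdgeColoring c)
    (hx : ∀ u, G.Adj x u → u ≠ z → c s(x, u) ≠ γ) (hz : ∀ u, G.Adj z u → u ≠ x → c s(z, u) ≠ γ) :
    G.IsProperEdgeColoring (Function.update c s(x, z) γ) := by
  have hmissing ⦃v u w⦄ (hw : G.Adj v w) (hu : s(v, u) = s(x, z)) (hne : s(v, w) ≠ s(x, z)) :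
      c s(v, w) ≠ γ := by
    rcases Sym2.eq_iff.mp hu with ⟨rfl, rfl⟩ | ⟨rfl, rfl⟩
    · exact hx w hw (by rintro rfl; exact hne rfl)
    · exact hz w hw (by rintro rfl; exact hne Sym2.eq_swap)
  intro v u w hu hw h
  by_cases hux : s(v, u) = s(x, z) <;> by_cases hwx : s(v, w) = s(x, z)
  · exact Sym2.congr_right.mp (hux.trans hwx.symm)
  · rw [hux, Function.update_self, Function.update_of_ne hwx] at h
    exact absurd h.symm (hmissing hw hux hwx)
  · rw [hwx, Function.update_self, Function.update_of_ne hux] at h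
    exact absurd h (hmissing hu hwx hux)
  · rw [Function.update_of_ne hux, Function.update_of_ne hwx] at h
    exact hc (deleteEdges_adj_of_ne hu hux) (deleteEdges_adj_of_ne hw hwx) h

end ProperEdgeColoring

section MaxDegreeTwo

variable {V : Type*} [Fintype V] {G : SimpleGraph V} [DecidableRel G.Adj]

theorem Connected.card_filter_degree_le_one_le_two (hG : G.Connected)
    (hdeg : ∀ v, G.degree v ≤ 2) : #{v | G.degree v ≤ 1} ≤ 2 := by
  classical
  have hconn := hG.card_vert_le_card_edgeSet_add_one
  rw [Nat.card_eq_fintype_card, Nat.card_eq_fintype_card, ← edgeFinset_card] at hconn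
  have hsum : ∑ v, G.degree v + #{v | G.degree v ≤ 1} ≤ ∑ _v : V, 2 := by
    rw [card_filter, ← sum_add_distrib]
    exact sum_le_sum fun v _ => by have := hdeg v; split_ifs <;> omega
  rw [G.sum_degrees_eq_twice_card_edges, sum_const, card_univ, smul_eq_mul] at hsum
  omega

theorem not_reachable_of_degree_le_one {x a b : V} (hdeg : ∀ v, G.degree v ≤ 2)
    (hx : G.degree x ≤ 1) (ha : G.degree a ≤ 1) (hb : G.degree b ≤ 1) (hxa : x ≠ a) (hxb : x ≠ b)
    (hab : a ≠ b) (hra : G.Reachable x a) : ¬G.Reachable x b := by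
  classical
  intro hrb
  set C := G.connectedComponentMk x
  have hdegC (v : C) : C.toSimpleGraph.degree v ≤ G.degree v :=
    Copy.degree_le ⟨C.toSimpleGraph_hom, Subtype.val_injective⟩ v
  have hmem {v : V} (hv : G.Reachable x v) : v ∈ C.supp :=
    (C.mem_supp_iff v).2 (ConnectedComponent.eq.2 hv.symm)
  have hsub : ({⟨x, hmem (Reachable.refl x)⟩, ⟨a, hmem hra⟩, ⟨b, hmem hrb⟩} : Finset C) ⊆
      ({v | C.toSimpleGraph.degree v ≤ 1} : Finset C) := by
    intro v hv
    simp only [mem_insert, mem_singleton] at hv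
    rw [mem_filter]
    refine ⟨mem_univ _, (hdegC v).trans ?_⟩
    rcases hv with rfl | rfl | rfl <;> assumption
  have := (card_le_card hsub).trans (C.connected_toSimpleGraph.card_filter_degree_le_one_le_two
    fun v => (hdegC v).trans (hdeg v))
  rw [card_insert_of_notMem (by simp [hxa, hxb]), card_pair (by simpa using hab)] at this
  omega

end MaxDegreeTwo

section Kempe

variable {V α : Type*} [DecidableEq α]

def kempeGraph (G : SimpleGraph V) (c : Sym2 V → α) (a b : α) : SimpleGraph V where
  Adj u v := G.Adj u v ∧ (c s(u, v) = a ∨ c s(u, v) = b)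
  symm := ⟨fun _ _ ⟨h, hc⟩ => ⟨h.symm, by rwa [Sym2.eq_swap]⟩⟩
  loopless := ⟨fun v h => G.loopless.irrefl v h.1⟩

instance (G : SimpleGraph V) [DecidableRel G.Adj] (c : Sym2 V → α) (a b : α) :
    DecidableRel (G.kempeGraph c a b).Adj :=
  fun _ _ => inferInstanceAs (Decidable (_ ∧ _))

open Classical in
noncomputable def kempeChange (G : SimpleGraph V) (c : Sym2 V → α) (a b : α) (x : V) :
    Sym2 V → α := fun e =>
  if ∃ v ∈ e, (G.kempeGraph c a b).Reachable x v then Equiv.swap a b (c e) else c e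

variable {G : SimpleGraph V} {c : Sym2 V → α} {a b : α} {x : V}

theorem kempeChange_apply_of_reachable {v u : V} (hv : (G.kempeGraph c a b).Reachable x v) :
    G.kempeChange c a b x s(v, u) = Equiv.swap a b (c s(v, u)) :=
  if_pos ⟨v, Sym2.mem_mk_left v u, hv⟩

theorem kempeChange_apply_of_not_reachable {v u : V} (h : G.Adj v u)
    (hv : ¬(G.kempeGraph c a b).Reachable x v) : G.kempeChange c a b x s(v, u) = c s(v, u) := by
  unfold kempeChange
  split_ifs with he
  · obtain ⟨w, hw, hr⟩ := he
    rcases Sym2.mem_iff.1 hw with rfl | rfl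
    · exact absurd hr hv
    -- `u` lies on the chain but `v` does not, so the edge `s(v, u)` is colored neither `a` nor `b`.
    · refine Equiv.swap_apply_of_ne_of_ne (fun hca => hv ?_) (fun hcb => hv ?_) <;>
        exact hr.trans (Adj.reachable ⟨h.symm, by rw [Sym2.eq_swap]; tauto⟩)
  · rfl

theorem IsProperEdgeColoring.kempeChange (hc : G.IsProperEdgeColoring c) :
    G.IsProperEdgeColoring (G.kempeChange c a b x) := by
  intro v u w hu hw h
  by_cases hv : (G.kempeGraph c a b).Reachable x v
  · rw [kempeChange_apply_of_reachable hv, kempeChange_apply_of_reachable hv] at h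
    exact hc hu hw ((Equiv.swap a b).injective h)
  · rw [kempeChange_apply_of_not_reachable hu hv, kempeChange_apply_of_not_reachable hw hv] at h
    exact hc hu hw h

variable [Fintype V] [DecidableRel G.Adj]

theorem degree_kempeGraph_le (hc : G.IsProperEdgeColoring c) {v : V} (T : Finset α)
    (hT : ∀ u, (G.kempeGraph c a b).Adj v u → c s(v, u) ∈ T) :
    (G.kempeGraph c a b).degree v ≤ #T :=
  card_le_card_of_injOn (fun u => c s(v, u)) (fun u hu => hT u ((mem_neighborFinset ..).1 hu))
    fun _ hu _ hw h => hc ((mem_neighborFinset ..).1 hu).1 ((mem_neighborFinset ..).1 hw).1 h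

theorem degree_kempeGraph_le_two (hc : G.IsProperEdgeColoring c) (v : V) :
    (G.kempeGraph c a b).degree v ≤ 2 :=
  (degree_kempeGraph_le hc {a, b} fun _ h => by rcases h.2 with h | h <;> simp [h]).trans
    card_le_two

theorem degree_kempeGraph_le_one_of_left (hc : G.IsProperEdgeColoring c) {v : V}
    (ha : ∀ u, G.Adj v u → c s(v, u) ≠ a) : (G.kempeGraph c a b).degree v ≤ 1 :=
  (degree_kempeGraph_le hc {b} fun u h => by simpa [ha u h.1] using h.2).trans
    (card_singleton b).le

theorem degree_kempeGraph_le_one_of_right (hc : G.IsProperEdgeColoring c) {v : V}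
    (hb : ∀ u, G.Adj v u → c s(v, u) ≠ b) : (G.kempeGraph c a b).degree v ≤ 1 :=
  (degree_kempeGraph_le hc {a} fun u h => by simpa [hb u h.1] using h.2).trans
    (card_singleton a).le

end Kempe

section Vizing

variable {V α : Type*} [Fintype V] [DecidableEq V] [Fintype α] [DecidableEq α]

/-- The colors missing at `v` once the edge `s(v, w)` is ignored. -/
def freeColors (G : SimpleGraph V) [DecidableRel G.Adj] (c : Sym2 V → α) (v w : V) : Finset α :=
  univ \ ((G.neighborFinset v).erase w).image fun u => c s(v, u)

def IsFan (G : SimpleGraph V) [DecidableRel G.Adj] (c : Sym2 V → α) (x : V) (l : List V) : Prop :=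
  l.Nodup ∧ (∀ z ∈ l, G.Adj x z) ∧ l.IsChain fun z w => c s(x, w) ∈ G.freeColors c z x

variable {G : SimpleGraph V} [DecidableRel G.Adj] {c : Sym2 V → α} {x : V}

theorem mem_freeColors {v w : V} {γ : α} :
    γ ∈ G.freeColors c v w ↔ ∀ u, G.Adj v u → u ≠ w → c s(v, u) ≠ γ := by
  simp only [freeColors, mem_sdiff, mem_univ, mem_image, mem_erase, mem_neighborFinset, true_and]
  grind

theorem two_le_card_freeColors {v w : V} (hdeg : G.degree v < Fintype.card α) (hvw : G.Adj v w) :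
    2 ≤ #(G.freeColors c v w) := by
  have hw : w ∈ G.neighborFinset v := (G.mem_neighborFinset v w).2 hvw
  have := card_image_le (s := (G.neighborFinset v).erase w) (f := fun u => c s(v, u))
  rw [freeColors, card_univ_sdiff, ← card_neighborFinset_eq_degree] at *
  rw [card_erase_of_mem hw] at this
  have := card_pos.2 ⟨w, hw⟩
  omega

theorem freeColors_update_of_ne {v z : V} {γ : α} (hv : v ≠ x) :
    G.freeColors (Function.update c s(x, z) γ) v x = G.freeColors c v x := by
  ext δ
  simp only [mem_freeColors]
  refine forall₃_congr fun u _ hu => ?_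
  rw [Function.update_of_ne (Sym2.mk_ne_mk_of_ne_of_ne hv hu)]

theorem IsProperEdgeColoring.update_shift {z w : V}
    (hc : (G.deleteEdges {s(x, z)}).IsProperEdgeColoring c) (hxw : G.Adj x w) (hwz : w ≠ z)
    (hfree : c s(x, w) ∈ G.freeColors c z x) :
    (G.deleteEdges {s(x, w)}).IsProperEdgeColoring (Function.update c s(x, z) (c s(x, w))) := by
  refine IsProperEdgeColoring.update (hc.mono fun a b h => ?_) (fun u hu huz h => ?_)
    (fun u hu hux => mem_freeColors.1 hfree u (deleteEdges_le _ hu) hux)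
  · simp only [deleteEdges_adj] at h ⊢
    exact ⟨h.1.1, h.2⟩
  · obtain ⟨hxu, hne⟩ := deleteEdges_adj.1 hu
    refine hne ?_
    rw [Set.mem_singleton_iff, Sym2.congr_right]
    exact hc (deleteEdges_adj_of_ne hxu (by rwa [Ne, Sym2.congr_right]))
      (deleteEdges_adj_of_ne hxw (by rwa [Ne, Sym2.congr_right])) h

theorem mem_freeColors_update_shift {z w : V} {γ : α} (hxw : G.Adj x w) (hwz : w ≠ z)
    (hγ : γ ∈ G.freeColors c x z) :
    γ ∈ G.freeColors (Function.update c s(x, z) (c s(x, w))) x w := by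
  refine mem_freeColors.2 fun u hu huw => ?_
  by_cases huz : u = z
  · rw [huz, Function.update_self]
    exact mem_freeColors.1 hγ w hxw hwz
  · rw [Function.update_of_ne (by rwa [Ne, Sym2.congr_right])]
    exact mem_freeColors.1 hγ u hu huz

theorem mem_freeColors_kempeChange_of_reachable {H : SimpleGraph V} {a b γ : α} {v w : V}
    (hv : (H.kempeGraph c a b).Reachable x v) :
    γ ∈ G.freeColors (H.kempeChange c a b x) v w ↔ Equiv.swap a b γ ∈ G.freeColors c v w := by
  simp only [mem_freeColors, kempeChange_apply_of_reachable hv, Ne, Equiv.swap_apply_eq_iff]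

theorem freeColors_kempeChange_of_not_reachable {H : SimpleGraph V} {a b : α} {v w : V}
    (hv : ¬(H.kempeGraph c a b).Reachable x v) (hGH : ∀ u, G.Adj v u → u ≠ w → H.Adj v u) :
    G.freeColors (H.kempeChange c a b x) v w = G.freeColors c v w := by
  ext γ
  simp only [mem_freeColors]
  refine forall₃_congr fun u hu huw => ?_
  rw [kempeChange_apply_of_not_reachable (hGH u hu huw) hv]

theorem isFan_append {l₁ l₂ : List V} :
    G.IsFan c x (l₁ ++ l₂) ↔ G.IsFan c x l₁ ∧ G.IsFan c x l₂ ∧ (∀ a ∈ l₁, ∀ b ∈ l₂, a ≠ b) ∧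
      ∀ z ∈ l₁.getLast?, ∀ w ∈ l₂.head?, c s(x, w) ∈ G.freeColors c z x := by
  simp only [IsFan, List.nodup_append, List.isChain_append, List.mem_append, or_imp, forall_and]
  tauto

theorem IsFan.length_le_degree {l : List V} (hfan : G.IsFan c x l) : l.length ≤ G.degree x := by
  rw [← List.toFinset_card_of_nodup hfan.1, ← card_neighborFinset_eq_degree]
  exact card_le_card fun z hz => (mem_neighborFinset ..).2 (hfan.2.1 z (List.mem_toFinset.1 hz))

theorem IsFan.concat {l : List V} {v : V} (hfan : G.IsFan c x l) (hl : l ≠ []) (hv : v ∉ l)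
    (hxv : G.Adj x v) (hfree : c s(x, v) ∈ G.freeColors c (l.getLast hl) x) :
    G.IsFan c x (l ++ [v]) := by
  refine isFan_append.2 ⟨hfan, ⟨List.nodup_singleton v, by simpa using hxv,
    List.isChain_singleton v⟩, fun a ha b hb => ?_, ?_⟩
  · rintro rfl
    exact hv (List.mem_singleton.1 hb ▸ ha)
  · simpa [List.getLast?_eq_some_getLast hl] using hfree

/-- Rotating the fan: each spoke takes the color of the next one, and the last spoke gets `γ`. -/
theorem IsFan.exists_isProperEdgeColoring_of_mem_freeColors {z : V} {l : List V} {γ : α}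
    (hfan : G.IsFan c x (z :: l)) (hc : (G.deleteEdges {s(x, z)}).IsProperEdgeColoring c)
    (hx : γ ∈ G.freeColors c x z)
    (hlast : γ ∈ G.freeColors c ((z :: l).getLast (List.cons_ne_nil z l)) x) :
    ∃ c' : Sym2 V → α, G.IsProperEdgeColoring c' := by
  induction l generalizing z c with
  | nil => exact ⟨_, hc.update (mem_freeColors.1 hx) (mem_freeColors.1 hlast)⟩
  | cons w l ih =>
    obtain ⟨hnd, hadj, hchain⟩ := hfan
    rw [List.isChain_cons_cons] at hchain
    have hz : z ∉ w :: l := (List.nodup_cons.1 hnd).1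
    have hwz : w ≠ z := by rintro rfl; exact hz List.mem_cons_self
    have hxw : G.Adj x w := hadj w (by simp)
    have hspoke (u : V) (hu : u ∈ w :: l) :
        Function.update c s(x, z) (c s(x, w)) s(x, u) = c s(x, u) :=
      Function.update_of_ne (by rw [Ne, Sym2.congr_right]; rintro rfl; exact hz hu) _ _
    refine ih ⟨(List.nodup_cons.1 hnd).2, fun u hu => hadj u (List.mem_cons_of_mem _ hu), ?_⟩
      (hc.update_shift hxw hwz hchain.1) (mem_freeColors_update_shift hxw hwz hx) ?_
    · refine hchain.2.imp_of_mem_tail_imp fun a b ha hb h => ?_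
      rwa [hspoke b (List.mem_of_mem_tail hb),
        freeColors_update_of_ne (hadj a (List.mem_cons_of_mem _ ha)).ne']
    · rw [freeColors_update_of_ne (hadj _ (List.mem_cons_of_mem _ (List.getLast_mem _))).ne']
      simpa using hlast

theorem IsFan.kempeChange {y v z : V} {l : List V} {a b : α}
    (hab : ∀ w, G.Adj x w → w ≠ y → w ≠ v → c s(x, w) ≠ a ∧ c s(x, w) ≠ b)
    (hfan : G.IsFan c x (z :: l)) (hyl : y ∉ l) (hvl : v ∉ l) :
    G.IsFan ((G.deleteEdges {s(x, y)}).kempeChange c a b x) x (z :: l) := by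
  refine ⟨hfan.1, hfan.2.1, hfan.2.2.imp_of_mem_tail_imp fun t w ht hw h => ?_⟩
  have hxw := hfan.2.1 w (List.mem_of_mem_tail hw)
  obtain ⟨hwa, hwb⟩ := hab w hxw (by rintro rfl; exact hyl hw) (by rintro rfl; exact hvl hw)
  rw [kempeChange_apply_of_reachable (Reachable.refl x), Equiv.swap_apply_of_ne_of_ne hwa hwb]
  by_cases htK : ((G.deleteEdges {s(x, y)}).kempeGraph c a b).Reachable x t
  · rwa [mem_freeColors_kempeChange_of_reachable htK, Equiv.swap_apply_of_ne_of_ne hwa hwb]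
  · rwa [freeColors_kempeChange_of_not_reachable htK fun u hu hux => deleteEdges_adj_of_ne hu
      (Sym2.mk_ne_mk_of_ne_of_ne (hfan.2.1 t ht).ne' hux)]

/-- `x` misses `a`, and `p`, `u` miss `b`, which colors no spoke other than `s(x, v)`: all three end
`a`/`b`-paths, and a path has only two ends. -/
theorem not_reachable_kempeGraph_deleteEdges {y v p u : V} {a b : α}
    (hc : (G.deleteEdges {s(x, y)}).IsProperEdgeColoring c) (ha : a ∈ G.freeColors c x y)
    (hb : ∀ w, G.Adj x w → w ≠ y → w ≠ v → c s(x, w) ≠ b) (hxp : G.Adj x p) (hxu : G.Adj x u)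
    (hpv : p ≠ v) (huv : u ≠ v) (hpu : p ≠ u) (hbp : b ∈ G.freeColors c p x)
    (hbu : b ∈ G.freeColors c u x)
    (hp : ((G.deleteEdges {s(x, y)}).kempeGraph c a b).Reachable x p) :
    ¬((G.deleteEdges {s(x, y)}).kempeGraph c a b).Reachable x u := by
  have hend {w : V} (hxw : G.Adj x w) (hwv : w ≠ v) (hbw : b ∈ G.freeColors c w x) :
      ((G.deleteEdges {s(x, y)}).kempeGraph c a b).degree w ≤ 1 := by
    refine degree_kempeGraph_le_one_of_right hc fun t ht => ?_
    obtain ⟨hwt, hne⟩ := deleteEdges_adj.1 ht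
    rcases eq_or_ne t x with rfl | htx
    · rw [Sym2.eq_swap]
      exact hb w hxw (by rintro rfl; exact hne Sym2.eq_swap) hwv
    · exact mem_freeColors.1 hbw t hwt htx
  refine not_reachable_of_degree_le_one (degree_kempeGraph_le_two hc)
    (degree_kempeGraph_le_one_of_left hc fun t ht => ?_) (hend hxp hpv hbp) (hend hxu huv hbu)
    hxp.ne hxu.ne hpu hp
  obtain ⟨hxt, hne⟩ := deleteEdges_adj.1 ht
  exact mem_freeColors.1 ha t hxt (by rintro rfl; exact hne rfl)

/-- The Kempe step: `a` is missing at `x`, while `b` is missing at the last vertex `u` but colors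
the spoke `s(x, v)`. Swap `a` and `b` on the chain at `x`, which misses `u` or the vertex `p` before
`v`. If it misses `p`, rotate the fan up to `p`; otherwise rotate the whole fan, in which `s(x, v)`
is now colored `a`. -/
theorem IsFan.exists_isProperEdgeColoring_of_kempe {y v u : V} {A B : List V} {a b : α}
    (hc : (G.deleteEdges {s(x, y)}).IsProperEdgeColoring c)
    (hfan : G.IsFan c x (y :: A ++ v :: B ++ [u])) (ha : a ∈ G.freeColors c x y)
    (hv : c s(x, v) = b) (hb : b ∈ G.freeColors c u x) :
    ∃ c' : Sym2 V → α, G.IsProperEdgeColoring c' := by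
  have hfan' : G.IsFan c x (y :: (A ++ v :: (B ++ [u]))) := by simpa using hfan
  obtain ⟨hfanP, hfanV, hdisj, hjunction⟩ :=
    isFan_append.1 (show G.IsFan c x ((y :: A) ++ v :: (B ++ [u])) from hfan')
  set p := (y :: A).getLast (List.cons_ne_nil y A)
  have hpP : p ∈ y :: A := List.getLast_mem _
  have hbp : b ∈ G.freeColors c p x := hv ▸ hjunction p (List.getLast?_eq_some_getLast _) v rfl
  have hxv : G.Adj x v := hfanV.2.1 v List.mem_cons_self
  have hvy : v ≠ y := (hdisj y List.mem_cons_self v List.mem_cons_self).symm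
  have hxu : G.Adj x u := hfanV.2.1 u (by simp)
  have hvV : v ∉ B ++ [u] := (List.nodup_cons.1 hfanV.1).1
  by_cases hau : a ∈ G.freeColors c u x
  · exact hfan'.exists_isProperEdgeColoring_of_mem_freeColors hc ha (by simpa using hau)
  by_cases hap : a ∈ G.freeColors c p x
  · exact hfanP.exists_isProperEdgeColoring_of_mem_freeColors hc ha hap
  have hab (w : V) (hxw : G.Adj x w) (hwy : w ≠ y) (hwv : w ≠ v) :
      c s(x, w) ≠ a ∧ c s(x, w) ≠ b :=
    ⟨mem_freeColors.1 ha w hxw hwy, fun h => hwv (hc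
      (deleteEdges_adj_of_ne hxw (by rwa [Ne, Sym2.congr_right]))
      (deleteEdges_adj_of_ne hxv (by rwa [Ne, Sym2.congr_right])) (h.trans hv.symm))⟩
  set K := (G.deleteEdges {s(x, y)}).kempeGraph c a b
  have hends : K.Reachable x p → ¬K.Reachable x u :=
    not_reachable_kempeGraph_deleteEdges hc ha (fun w h1 h2 h3 => (hab w h1 h2 h3).2)
      (hfanP.2.1 p hpP) hxu (hdisj p hpP v List.mem_cons_self) (by rintro rfl; exact hvV (by simp))
      (hdisj p hpP u (by simp)) hbp hb
  have hb₁ : b ∈ G.freeColors ((G.deleteEdges {s(x, y)}).kempeChange c a b x) x y := by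
    rwa [mem_freeColors_kempeChange_of_reachable (Reachable.refl x), Equiv.swap_apply_right]
  have hyA : y ∉ A := (List.nodup_cons.1 hfanP.1).1
  have hvA : v ∉ A := fun h => hdisj v (List.mem_cons_of_mem _ h) v List.mem_cons_self rfl
  by_cases hpK : K.Reachable x p
  · refine IsFan.exists_isProperEdgeColoring_of_mem_freeColors (l := A ++ v :: (B ++ [u]))
      (isFan_append.2 ⟨hfanP.kempeChange hab hyA hvA, hfanV.kempeChange hab
        (fun h => hdisj y List.mem_cons_self y (List.mem_cons_of_mem _ h) rfl) hvV, hdisj, ?_⟩)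
      hc.kempeChange hb₁ ?_
    · intro z hz w hw
      obtain rfl : z = p := (Option.mem_some_iff.1 (List.getLast?_eq_some_getLast _ ▸ hz)).symm
      obtain rfl : w = v := (Option.mem_some_iff.1 hw).symm
      rwa [kempeChange_apply_of_reachable (Reachable.refl x), hv, Equiv.swap_apply_right,
        mem_freeColors_kempeChange_of_reachable hpK, Equiv.swap_apply_left]
    · simpa [freeColors_kempeChange_of_not_reachable (hends hpK) fun t ht htx =>
        deleteEdges_adj_of_ne ht (Sym2.mk_ne_mk_of_ne_of_ne hxu.ne' htx)] using hb
  · refine (hfanP.kempeChange hab hyA hvA).exists_isProperEdgeColoring_of_mem_freeColors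
      hc.kempeChange hb₁ ?_
    rwa [freeColors_kempeChange_of_not_reachable hpK fun t ht htx =>
      deleteEdges_adj_of_ne ht (Sym2.mk_ne_mk_of_ne_of_ne (hfanP.2.1 p hpP).ne' htx)]

theorem IsFan.exists_isProperEdgeColoring_of_degree_lt {y : V} {l : List V}
    (hdeg : ∀ v, G.degree v < Fintype.card α)
    (hc : (G.deleteEdges {s(x, y)}).IsProperEdgeColoring c) (hfan : G.IsFan c x (y :: l)) :
    ∃ c' : Sym2 V → α, G.IsProperEdgeColoring c' := by
  set u := (y :: l).getLast (List.cons_ne_nil y l)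
  have hxu : G.Adj x u := hfan.2.1 u (List.getLast_mem _)
  obtain ⟨a, ha⟩ : (G.freeColors c x y).Nonempty := by
    have := two_le_card_freeColors (c := c) (hdeg x) (hfan.2.1 y List.mem_cons_self)
    exact card_pos.1 (by omega)
  obtain ⟨b, hb⟩ : ((G.freeColors c u x).erase (c s(x, u))).Nonempty := by
    have := two_le_card_freeColors (c := c) (hdeg u) hxu.symm
    have := pred_card_le_card_erase (s := G.freeColors c u x) (a := c s(x, u))
    exact card_pos.1 (by omega)
  obtain ⟨hbu, hb⟩ := mem_erase.1 hb
  by_cases hbx : b ∈ G.freeColors c x y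
  · exact hfan.exists_isProperEdgeColoring_of_mem_freeColors hc hbx hb
  obtain ⟨v, hxv, hvy, hvb⟩ : ∃ v, G.Adj x v ∧ v ≠ y ∧ c s(x, v) = b := by
    simpa [mem_freeColors] using hbx
  by_cases hvl : v ∈ l
  · obtain ⟨A, B', rfl⟩ := List.append_of_mem hvl
    rcases List.eq_nil_or_concat' B' with rfl | ⟨B, u', rfl⟩
    · simp [u, hvb] at hbu
    · exact IsFan.exists_isProperEdgeColoring_of_kempe (A := A) (B := B) hc (by simpa using hfan)
        ha hvb (by simpa [u] using hb)
  · have hfan' := hfan.concat (List.cons_ne_nil y l) (by simp [hvy, hvl]) hxv (hvb ▸ hb)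
    have := hfan'.length_le_degree
    exact IsFan.exists_isProperEdgeColoring_of_degree_lt (l := l ++ [v]) hdeg hc hfan'
termination_by G.degree x - l.length
decreasing_by simp at this ⊢; omega

/-- Vizing's theorem. -/
theorem exists_isProperEdgeColoring [Nonempty α] (G : SimpleGraph V) [DecidableRel G.Adj]
    (hdeg : ∀ v, G.degree v < Fintype.card α) : ∃ c : Sym2 V → α, G.IsProperEdgeColoring c := by
  by_cases hE : ∃ x y, G.Adj x y
  swap
  · simp only [not_exists] at hE
    exact ⟨fun _ => Classical.arbitrary α, fun v u _ h => absurd h (hE v u)⟩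
  obtain ⟨x, y, hxy⟩ := hE
  classical
  have hlt : G.deleteEdges {s(x, y)} < G := by
    refine (deleteEdges_le _).lt_of_ne fun h => ?_
    have := hxy
    rw [← h, deleteEdges_adj] at this
    exact this.2 rfl
  obtain ⟨c, hc⟩ := exists_isProperEdgeColoring (G.deleteEdges {s(x, y)}) fun v =>
    ((Copy.ofLE _ _ (deleteEdges_le _)).degree_le v).trans_lt (hdeg v)
  exact IsFan.exists_isProperEdgeColoring_of_degree_lt (l := []) hdeg hc
    ⟨List.nodup_singleton y, by simpa using hxy, List.isChain_singleton y⟩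
termination_by #G.edgeFinset
decreasing_by exact card_lt_card (edgeFinset_ssubset_edgeFinset.2 hlt)

end Vizing

section Split

variable {V : Type*}

theorem ncard_neighborSet_eq_degree (G : SimpleGraph V) (v : V) [Fintype (G.neighborSet v)] :
    (G.neighborSet v).ncard = G.degree v := by
  rw [Set.ncard_eq_toFinset_card', ← neighborFinset_def, card_neighborFinset_eq_degree]

/-- Keep the edges inside `X`, delete those with no end in `X`, and detach each edge from `u ∈ X` to
`w ∉ X` from `w`: it ends in a private copy `inr (u, w)` of `w` instead. -/
def splitGraph (G : SimpleGraph V) (X : Set V) : SimpleGraph (V ⊕ V × V) where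
  Adj a b := match a, b with
    | .inl u, .inl w => G.Adj u w ∧ u ∈ X ∧ w ∈ X
    | .inl u, .inr (v, w) => v = u ∧ G.Adj u w ∧ u ∈ X ∧ w ∉ X
    | .inr (v, w), .inl u => v = u ∧ G.Adj u w ∧ u ∈ X ∧ w ∉ X
    | .inr _, .inr _ => False
  symm := ⟨fun a b h => match a, b, h with
    | .inl _, .inl _, h => ⟨h.1.symm, h.2.2, h.2.1⟩
    | .inl _, .inr _, h => h
    | .inr _, .inl _, h => h⟩
  loopless := ⟨fun a h => match a, h with
    | .inl u, h => G.loopless.irrefl u h.1⟩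

variable {G : SimpleGraph V} {X : Set V} [DecidablePred (· ∈ X)]

def splitVertex (X : Set V) [DecidablePred (· ∈ X)] (v u : V) : V ⊕ V × V :=
  if u ∈ X then .inl u else .inr (v, u)

def splitEdge (X : Set V) [DecidablePred (· ∈ X)] : Sym2 V → Sym2 (V ⊕ V × V) :=
  Sym2.lift ⟨fun v u => s(splitVertex X u v, splitVertex X v u), fun _ _ => Sym2.eq_swap⟩

theorem splitVertex_injective (v : V) : Function.Injective (splitVertex X v) := by
  intro u w h
  unfold splitVertex at h
  split_ifs at h <;> simp_all

theorem splitEdge_mk_of_mem {v : V} (hv : v ∈ X) (u : V) :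
    splitEdge X s(v, u) = s(.inl v, splitVertex X v u) := by
  simp [splitEdge, splitVertex, hv]

theorem splitGraph_adj_splitVertex {v u : V} (hv : v ∈ X) (h : G.Adj v u) :
    (splitGraph G X).Adj (.inl v) (splitVertex X v u) := by
  unfold splitVertex
  split_ifs with hu
  · exact ⟨h, hv, hu⟩
  · exact ⟨rfl, h, hv, hu⟩

theorem ncard_neighborSet_splitGraph_lt [Finite V] {N : ℕ} (hN : 0 < N)
    (hX : ∀ v ∈ X, (G.neighborSet v).ncard < N) (a : V ⊕ V × V) :
    ((splitGraph G X).neighborSet a).ncard < N := by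
  match a with
  | .inl v =>
    by_cases hv : v ∈ X
    · have hsub : (splitGraph G X).neighborSet (.inl v) ⊆ splitVertex X v '' G.neighborSet v :=
        fun b hb => match b, hb with
        | .inl u, hb => ⟨u, hb.1, if_pos hb.2.2⟩
        | .inr (_, u), hb => ⟨u, hb.1 ▸ hb.2.1, by rw [hb.1]; exact if_neg hb.2.2.2⟩
      exact ((Set.ncard_le_ncard hsub).trans Set.ncard_image_le).trans_lt (hX v hv)
    · have hempty : (splitGraph G X).neighborSet (.inl v) = ∅ :=
        Set.eq_empty_of_forall_notMem fun b hb => hv <| match b, hb with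
        | .inl _, hb => hb.2.1
        | .inr _, hb => hb.1 ▸ hb.2.2.1
      rwa [hempty, Set.ncard_empty]
  | .inr (v, w) =>
    rcases Set.eq_empty_or_nonempty ((splitGraph G X).neighborSet (.inr (v, w))) with he | ⟨b, hb⟩
    · rwa [he, Set.ncard_empty]
    have hsub : (splitGraph G X).neighborSet (.inr (v, w)) ⊆ {.inl v} := fun b hb =>
      match b, hb with
      | .inl _, hb => by rw [Set.mem_singleton_iff, hb.1]
    match b, hb with
    | .inl u, hb =>
      obtain ⟨rfl, hvw, hv, -⟩ := hb
      calc _ ≤ 1 := (Set.ncard_le_ncard hsub).trans (Set.ncard_singleton _).le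
        _ ≤ (G.neighborSet v).ncard := (Set.ncard_pos (Set.toFinite _)).2 ⟨w, hvw⟩
        _ < N := hX v hv

end Split

end SimpleGraph

theorem stmt_0 {V : Type*} [Fintype V] (G : SimpleGraph V) (r k : ℕ)
    (hr : 1 ≤ r) (hk : 1 ≤ k) :
    ∃ c : Sym2 V → Fin r,
      ∀ v : V, deg G v ≤ r * k - 1 →
        ∀ i : Fin r, {u | G.Adj v u ∧ c s(v, u) = i}.ncard ≤ k := by
  classical
  set X := {v | deg G v ≤ r * k - 1}
  have : Nonempty (Fin r × Fin k) := ⟨(⟨0, hr⟩, ⟨0, hk⟩)⟩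
  have hrk : 0 < r * k := Nat.mul_pos hr hk
  obtain ⟨c, hc⟩ := exists_isProperEdgeColoring (α := Fin r × Fin k) (splitGraph G X) fun a => by
    rw [← ncard_neighborSet_eq_degree, Fintype.card_prod, Fintype.card_fin, Fintype.card_fin]
    exact ncard_neighborSet_splitGraph_lt hrk (fun v hv => Nat.lt_of_le_sub_one hrk hv) a
  refine ⟨fun e => (c (splitEdge X e)).1, fun v hv i => ?_⟩
  simp only [splitEdge_mk_of_mem (show v ∈ X from hv)]
  calc _ ≤ (Set.univ : Set (Fin k)).ncard :=
        Set.ncard_le_ncard_of_injOn (fun u => (c s(.inl v, splitVertex X v u)).2)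
          (fun _ _ => Set.mem_univ _) fun u hu w hw h =>
            splitVertex_injective v (hc (splitGraph_adj_splitVertex hv hu.1)
              (splitGraph_adj_splitVertex hv hw.1) (Prod.ext (hu.2.trans hw.2.symm) h))
    _ = k := by simp
end

section
/- Let H be a connected bipartite graph with bipartition {V1, V2}, |V_i| = n_i, Delta_i the maximum degree among vertices of V_i, and define beta(H) = n_1*Delta_1 + n_2*Delta_2. Then the 2-color size-Ramsey number of H satisfies R̂(H) ≥ beta(H)/4; that is, every graph G with fewer than beta(H)/4 edges admits a 2-coloring of its edges with no monochromatic copy of H. -/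
open SimpleGraph Finset

/-!
Let `Δ` be the maximum degree on the side `S` of `H` with the larger `|S| Δ`, so
`2 e(G) < |S| Δ`, and let `B` be the set of vertices of `G` of degree at least `Δ`; by the
handshake lemma `|B| Δ ≤ 2 e(G)`, hence `|B| < |S|`. Colour an edge of `G` by whether it stays
inside one side of the cut `(B, Bᶜ)`. A copy of `H` maps a vertex of degree `Δ` in `S` into `B`.
Since `H` is connected, a copy in the first colour lies entirely on one side of the cut, and a
copy in the second colour alternates between the sides exactly as `H` alternates between its
parts; either way `S` is mapped injectively into `B`, which is too small.
-/

section

variable {W V : Type*}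

theorem SimpleGraph.Preconnected.iff_of_forall_adj {H : SimpleGraph W} (hH : H.Preconnected)
    {Q : W → Prop} (hQ : ∀ a b, H.Adj a b → (Q a ↔ Q b)) (v w : W) : Q v ↔ Q w := by
  obtain ⟨p⟩ := hH v w
  induction p with
  | nil => exact Iff.rfl
  | cons h _ ih => exact (hQ _ _ h).trans ih

theorem deg_eq_degree (G : SimpleGraph V) (v : V) [Fintype (G.neighborSet v)] :
    deg G v = G.degree v := by
  rw [deg, Set.ncard_eq_toFinset_card', Set.toFinset_card, card_neighborSet_eq_degree]

theorem deg_le_deg_of_injective [Finite V] {H : SimpleGraph W} {G : SimpleGraph V}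
    (f : H →g G) (hf : Function.Injective f) (v : W) : deg H v ≤ deg G (f v) :=
  calc deg H v = (f '' H.neighborSet v).ncard := (Set.ncard_image_of_injective _ hf).symm
    _ ≤ deg G (f v) := Set.ncard_le_ncard (by rintro _ ⟨w, hw, rfl⟩; exact f.map_adj hw)

theorem mul_card_le_deg_le_two_mul_ncard_edgeSet [Fintype V] (G : SimpleGraph V) (Δ : ℕ) :
    Δ * #{x | Δ ≤ deg G x} ≤ 2 * G.edgeSet.ncard := by
  classical
  calc Δ * #{x | Δ ≤ deg G x} ≤ ∑ x ∈ {x | Δ ≤ deg G x}, deg G x := by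
        rw [mul_comm, ← smul_eq_mul]
        exact card_nsmul_le_sum _ _ _ fun x hx => (mem_filter.mp hx).2
    _ ≤ ∑ x, deg G x := sum_le_sum_of_subset (subset_univ _)
    _ = 2 * G.edgeSet.ncard := by
        simp only [deg_eq_degree, sum_degrees_eq_twice_card_edges, Set.ncard_eq_toFinset_card',
          Set.toFinset_card, ← coe_edgeFinset, Finset.coe_sort_coe, Fintype.card_coe]

theorem fromRel_colorClass_adj {α : Type*} (G : SimpleGraph V) (c : Sym2 V → α) (i : α)
    (x y : V) :
    (fromRel fun u v => G.Adj u v ∧ c s(u, v) = i).Adj x y ↔ G.Adj x y ∧ c s(x, y) = i := by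
  rw [fromRel_adj, G.adj_comm y x, Sym2.eq_swap, or_self]
  exact ⟨And.right, fun h => ⟨G.ne_of_adj h.1, h⟩⟩

open Classical in
noncomputable def cutColoring (B : Set V) : Sym2 V → Fin 2 :=
  Sym2.lift ⟨fun x y => if (x ∈ B ↔ y ∈ B) then 0 else 1, fun _ _ => if_congr iff_comm rfl rfl⟩

theorem cutColoring_mk_eq_zero {B : Set V} {x y : V} :
    cutColoring B s(x, y) = 0 ↔ (x ∈ B ↔ y ∈ B) := by
  by_cases h : x ∈ B ↔ y ∈ B <;> simp [cutColoring, h]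

theorem cutColoring_mk_eq_one {B : Set V} {x y : V} :
    cutColoring B s(x, y) = 1 ↔ ¬(x ∈ B ↔ y ∈ B) := by
  by_cases h : x ∈ B ↔ y ∈ B <;> simp [cutColoring, h]

theorem mapsTo_of_forall_cutColoring_eq {H : SimpleGraph W} (hH : H.Preconnected) {S : Set W}
    (hS : ∀ a b, H.Adj a b → (a ∈ S ↔ b ∉ S)) {B : Set V} {f : W → V} {i : Fin 2}
    (hf : ∀ a b, H.Adj a b → cutColoring B s(f a, f b) = i) {u : W} (hu : u ∈ S)
    (hfu : f u ∈ B) : Set.MapsTo f S B := by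
  intro v hv
  fin_cases i
  · have hstep (a b : W) (hab : H.Adj a b) : f a ∈ B ↔ f b ∈ B :=
      cutColoring_mk_eq_zero.mp (hf a b hab)
    exact (hH.iff_of_forall_adj (Q := (f · ∈ B)) hstep v u).mpr hfu
  · have hstep (a b : W) (hab : H.Adj a b) : (a ∈ S ↔ f a ∈ B) ↔ (b ∈ S ↔ f b ∈ B) := by
      have := cutColoring_mk_eq_one.mp (hf a b hab)
      have := hS a b hab
      tauto
    exact ((hH.iff_of_forall_adj (Q := fun w => w ∈ S ↔ f w ∈ B) hstep v u).mpr
      (iff_of_true hu hfu)).mp hv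

theorem not_hasMonoCopy_cutColoring [Fintype V] {H : SimpleGraph W} (hH : H.Preconnected)
    (S : Finset W) (hS : ∀ a b, H.Adj a b → (a ∈ S ↔ b ∉ S)) (G : SimpleGraph V)
    (hG : 2 * G.edgeSet.ncard < #S * S.sup (deg H)) :
    ¬ HasMonoCopy H G (cutColoring {x | S.sup (deg H) ≤ deg G x}) := by
  classical
  set Δ := S.sup (deg H)
  set B : Finset V := {x | Δ ≤ deg G x}
  have hB : #B < #S := by
    have h := mul_card_le_deg_le_two_mul_ncard_edgeSet G Δ
    rw [mul_comm] at h
    exact lt_of_mul_lt_mul_right (h.trans_lt hG) (Nat.zero_le Δ)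
  rintro ⟨i, f, hf⟩
  have hadj (a b : W) (hab : H.Adj a b) : G.Adj (f a) (f b) ∧ cutColoring B s(f a, f b) = i := by
    simpa [B] using (fromRel_colorClass_adj G _ i _ _).mp (f.map_adj hab)
  let g : H →g G := ⟨f, fun hab => (hadj _ _ hab).1⟩
  have hSne : S.Nonempty := nonempty_iff_ne_empty.mpr fun h => by simp [h] at hG
  obtain ⟨u, huS, hu⟩ := exists_mem_eq_sup S hSne (deg H)
  have hdeg : deg H u ≤ deg G (f u) := deg_le_deg_of_injective g hf u
  have hfu : f u ∈ B := by simpa [B, Δ, hu] using hdeg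
  have hmaps : Set.MapsTo f S B :=
    mapsTo_of_forall_cutColoring_eq hH hS (fun a b hab => (hadj a b hab).2) huS hfu
  exact (card_le_card_of_injOn f hmaps hf.injOn).not_gt hB

end

theorem stmt_4_general {W : Type*} (H : SimpleGraph W)
    (V1 V2 : Finset W) (hdisj : Disjoint V1 V2)
    (hbip : ∀ u v, H.Adj u v → (u ∈ V1 ∧ v ∈ V2) ∨ (u ∈ V2 ∧ v ∈ V1))
    (hconn : H.Connected)
    {V : Type*} [Fintype V] (G : SimpleGraph V)
    (hE : 4 * G.edgeSet.ncard <
      V1.card * (V1.sup (deg H)) + V2.card * (V2.sup (deg H))) :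
    ∃ c : Sym2 V → Fin 2, ¬ HasMonoCopy H G c := by
  have hside (a b : W) (hab : H.Adj a b) : (a ∈ V1 ↔ b ∉ V1) ∧ (a ∈ V2 ↔ b ∉ V2) := by
    have := Finset.disjoint_left.mp hdisj
    rcases hbip a b hab with ⟨ha, hb⟩ | ⟨ha, hb⟩ <;> grind
  rcases le_total (V2.card * V2.sup (deg H)) (V1.card * V1.sup (deg H)) with h | h
  · exact ⟨_, not_hasMonoCopy_cutColoring hconn.preconnected V1
      (fun a b hab => (hside a b hab).1) G (by linarith)⟩
  · exact ⟨_, not_hasMonoCopy_cutColoring hconn.preconnected V2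
      (fun a b hab => (hside a b hab).2) G (by linarith)⟩

theorem stmt_4 {W : Type*} [Fintype W] [DecidableEq W] (H : SimpleGraph W)
    (V1 V2 : Finset W) (hdisj : Disjoint V1 V2) (hcover : V1 ∪ V2 = Finset.univ)
    (hbip : ∀ u v, H.Adj u v → (u ∈ V1 ∧ v ∈ V2) ∨ (u ∈ V2 ∧ v ∈ V1))
    (hconn : H.Connected)
    {V : Type*} [Fintype V] (G : SimpleGraph V)
    (hE : 4 * G.edgeSet.ncard <
      V1.card * (V1.sup (deg H)) + V2.card * (V2.sup (deg H))) :
    ∃ c : Sym2 V → Fin 2, ¬ HasMonoCopy H G c :=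
  stmt_4_general H V1 V2 hdisj hbip hconn G hE
end

section
/- For all integers r ≥ 2 and n ≥ r^2, if H is a connected graph on n vertices, then the r-color Ramsey number of H satisfies R_r(H) ≥ (r/2)*n; that is, the complete graph on any number N < (r/2)*n of vertices admits an r-edge-coloring with no monochromatic copy of H. -/
open SimpleGraph Finset

/-- Constancy of an edge-invariant along a copy of a connected graph. -/
lemma my_invariant {V W A : Type*} {G : SimpleGraph V} {H : SimpleGraph W}
    (hconn : H.Connected) (f : H →g G) (g : V → A)
    (hg : ∀ u v, G.Adj u v → g u = g v) (w w' : W) : g (f w) = g (f w') := by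
  obtain ⟨p⟩ := hconn w w'
  induction p with
  | nil => rfl
  | cons h p ih => exact (hg _ _ (f.map_adj h)).trans ih

lemma my_arith {r n q N : ℕ} (hn : r ^ 2 ≤ n) (h2q : r + 1 ≤ 2 * q)
    (hq : q + 1 ≤ r) (hN : 2 * N < r * n) (hq0 : 0 < q) :
    N < q * q * ((n - 1) / q) := by
  have hnr : r * r ≤ n := by nlinarith
  have hqn : q + 1 ≤ n := by nlinarith
  have h1 : q * ((n-1)/q) + q ≥ n := by
    have := Nat.div_add_mod (n-1) q; have := Nat.mod_lt (n-1) hq0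
    omega
  have h2 : r * n ≤ 2 * (q * q * ((n - 1) / q)) := by
    have h3 : n ≤ q * ((n-1)/q) + q := h1
    set t := (n-1)/q with ht
    have h4 : n - q ≤ q * t := by omega
    have h5 : q ≤ n := by omega
    zify [h5] at h4 ⊢
    nlinarith [h4, h2q, hq, hnr]
  omega

theorem stmt_6 (r n : ℕ) (hr : 2 ≤ r) (hn : r ^ 2 ≤ n)
    {W : Type*} [Fintype W] (H : SimpleGraph W) (hconn : H.Connected)
    (hcard : Fintype.card W = n)
    (N : ℕ) (hN : 2 * N < r * n) :
    ∃ c : Sym2 (Fin N) → Fin r, ¬ HasMonoCopy H (⊤ : SimpleGraph (Fin N)) c := by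
  by_cases hNn : N < n
  · refine ⟨fun _ => ⟨0, by omega⟩, ?_⟩
    rintro ⟨i, f, hf⟩
    have := Fintype.card_le_of_injective f hf
    simp [hcard] at this
    omega
  -- main case: n ≤ N, hence r ≥ 3
  push_neg at hNn
  have hr3 : 3 ≤ r := by nlinarith
  obtain ⟨q, hqp, hq1, hq2⟩ := Nat.exists_prime_lt_and_le_two_mul (r / 2) (by omega)
  have hqr : q + 1 ≤ r := by
    rcases Nat.lt_or_ge q r with h | h
    · omega
    · exfalso
      have : q = r := by omega
      subst this
      have : q % 2 = 1 := (Nat.Prime.eq_one_or_self_of_dvd hqp 2 · |> fun _ => by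
        rcases Nat.Prime.eq_two_or_odd hqp with h2 | h2 <;> omega) (by omega)
      omega
  have h2q : r + 1 ≤ 2 * q := by omega
  have hq0 : 0 < q := hqp.pos
  haveI : Fact q.Prime := ⟨hqp⟩
  haveI : NeZero q := ⟨hqp.ne_zero⟩
  set t := (n - 1) / q with ht
  have hkey : N < q * q * t := my_arith hn h2q hqr hN hq0
  have ht1 : q * t ≤ n - 1 := by
    rw [ht, mul_comm]
    exact Nat.div_mul_le_self _ _
  -- embed vertices into blown-up affine plane
  have hcard1 : Fintype.card (Fin N) ≤ Fintype.card ((ZMod q × ZMod q) × Fin t) := by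
    simp [ZMod.card]
    omega
  obtain ⟨ι⟩ := Function.Embedding.nonempty_of_card_le hcard1
  -- embed colors
  have hcard2 : Fintype.card (Option (ZMod q)) ≤ Fintype.card (Fin r) := by
    simp [ZMod.card]; omega
  obtain ⟨e⟩ := Function.Embedding.nonempty_of_card_le hcard2
  -- slope function
  set x : Fin N → ZMod q := fun u => (ι u).1.1 with hx
  set y : Fin N → ZMod q := fun u => (ι u).1.2 with hy
  set sl : Fin N → Fin N → Option (ZMod q) :=
    fun u v => if x u = x v then none else some ((y u - y v) / (x u - x v)) with hsl
  have hslsymm : ∀ u v, sl u v = sl v u := by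
    intro u v
    simp only [hsl]
    by_cases h : x u = x v
    · rw [if_pos h, if_pos h.symm]
    · rw [if_neg h, if_neg (Ne.symm h)]
      congr 1
      rw [← neg_sub (y v) (y u), ← neg_sub (x v) (x u), neg_div_neg_eq]
  refine ⟨Sym2.lift ⟨fun u v => e (sl u v), fun u v => congrArg e (hslsymm u v)⟩, ?_⟩
  rintro ⟨i, f, hf⟩
  -- H has at least two vertices, get an edge of H
  have hW2 : 1 < Fintype.card W := by
    rw [hcard]; nlinarith
  obtain ⟨w₀, w₁, hne⟩ := Fintype.exists_pair_of_one_lt_card hW2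
  obtain ⟨p⟩ := hconn w₀ w₁
  obtain ⟨a, b, hab⟩ : ∃ a b, H.Adj a b := by
    cases p with
    | nil => exact absurd rfl hne
    | cons h _ => exact ⟨_, _, h⟩
  -- the color i is in the range of e
  have hedge : ∀ u v : Fin N,
      (SimpleGraph.fromRel fun u v => (⊤ : SimpleGraph (Fin N)).Adj u v ∧
        Sym2.lift ⟨fun u v => e (sl u v), fun u v => congrArg e (hslsymm u v)⟩ s(u, v) = i).Adj u v →
      e (sl u v) = i := by
    intro u v huv
    rw [SimpleGraph.fromRel_adj] at huv
    rcases huv.2 with h | h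
    · exact h.2
    · rw [Sym2.eq_swap] at h
      exact h.2
  have hi : e (sl (f a) (f b)) = i := hedge _ _ (f.map_adj hab)
  -- every edge of the color class has slope o
  have hslo : ∀ u v : Fin N,
      (SimpleGraph.fromRel fun u v => (⊤ : SimpleGraph (Fin N)).Adj u v ∧
        Sym2.lift ⟨fun u v => e (sl u v), fun u v => congrArg e (hslsymm u v)⟩ s(u, v) = i).Adj u v →
      sl u v = sl (f a) (f b) := by
    intro u v huv
    exact e.injective ((hedge u v huv).trans hi.symm)
  have hn1 : 1 ≤ n := by nlinarith
  have hqtn : Fintype.card W ≤ q * t → False := by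
    intro hle
    rw [hcard] at hle
    omega
  rcases hoc : sl (f a) (f b) with _ | m
  · -- none case
    -- vertical lines: x is an edge invariant
    have hinv : ∀ w w' : W, x (f w) = x (f w') := by
      intro w w'
      refine my_invariant hconn f x ?_ w w'
      intro u v huv
      have hthis := (hslo u v huv).trans hoc
      simp only [hsl] at hthis
      by_cases h : x u = x v
      · exact h
      · rw [if_neg h] at hthis; exact absurd hthis (by simp)
    have hinj : Function.Injective (fun w : W => (y (f w), (ι (f w)).2)) := by
      intro w w' hww
      simp only [Prod.mk.injEq] at hww
      have hxx := hinv w w'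
      apply hf
      apply ι.injective
      exact Prod.ext (Prod.ext hxx hww.1) hww.2
    refine hqtn ?_
    calc Fintype.card W ≤ Fintype.card (ZMod q × Fin t) :=
          Fintype.card_le_of_injective _ hinj
      _ = q * t := by simp [ZMod.card]
  · -- some case
    -- slope m lines: y - m*x is an edge invariant
    have hinv : ∀ w w' : W,
        y (f w) - m * x (f w) = y (f w') - m * x (f w') := by
      intro w w'
      refine my_invariant hconn f (fun u => y u - m * x u) ?_ w w'
      intro u v huv
      have hthis := (hslo u v huv).trans hoc
      simp only [hsl] at hthis
      by_cases h : x u = x v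
      · rw [if_pos h] at hthis; exact absurd hthis (by simp)
      · rw [if_neg h] at hthis
        have h2 : (y u - y v) / (x u - x v) = m := by
          injection hthis
        rw [div_eq_iff (sub_ne_zero.mpr h)] at h2
        have h3 : y u - y v = m * (x u - x v) := h2
        ring_nf
        ring_nf at h3
        linear_combination h3
    have hinj : Function.Injective (fun w : W => (x (f w), (ι (f w)).2)) := by
      intro w w' hww
      simp only [Prod.mk.injEq] at hww
      have hyy : y (f w) = y (f w') := by
        have := hinv w w'
        rw [hww.1] at this
        linear_combination this
      apply hf
      apply ι.injective
      exact Prod.ext (Prod.ext hww.1 hyy) hww.2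
    refine hqtn ?_
    calc Fintype.card W ≤ Fintype.card (ZMod q × Fin t) :=
          Fintype.card_le_of_injective _ hinj
      _ = q * t := by simp [ZMod.card]
end

section
/- Let T be a tree whose bipartition has parts of sizes n_1 and n_2. Then for every r ≥ 1, the r-color size-Ramsey number satisfies R̂_r(T) ≤ (2r*n_1 + 1)(2r*n_2 + 1) = 4r^2*n_1*n_2 + 2r*(n_1 + n_2) + 1; that is, every r-coloring of the edges of the complete bipartite graph K_{2r*n_1+1, 2r*n_2+1} contains a monochromatic copy of T. -/
open SimpleGraph Finset

set_option maxHeartbeats 2000000 in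
lemma tree_embed {W : Type*} [Fintype W] [DecidableEq W] {V : Type*} [DecidableEq V]
    (T : SimpleGraph W) (hT : T.IsTree)
    (V1 V2 : Finset W) (hdisj : Disjoint V1 V2) (hcover : V1 ∪ V2 = Finset.univ)
    (hbip : ∀ u v, T.Adj u v → (u ∈ V1 ∧ v ∈ V2) ∨ (u ∈ V2 ∧ v ∈ V1))
    (G : SimpleGraph V) [DecidableRel G.Adj] (A B : Finset V) (hABdisj : Disjoint A B)
    (hAcard : V1.card + 1 ≤ A.card) (hBcard : V2.card + 1 ≤ B.card)
    (hdegA : ∀ a ∈ A, V2.card + 1 ≤ (B.filter (G.Adj a)).card)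
    (hdegB : ∀ b ∈ B, V1.card + 1 ≤ (A.filter (G.Adj b)).card) :
    ∃ f : W → V, Function.Injective f ∧ ∀ u v, T.Adj u v → G.Adj (f u) (f v) := by
  classical
  have hW : Nonempty W := hT.isConnected.nonempty
  obtain ⟨root⟩ := hW
  have hside : ∀ w, w ∈ V1 ↔ w ∉ V2 := by
    intro w
    have h1 : w ∈ V1 ∪ V2 := hcover ▸ mem_univ w
    rw [Finset.mem_union] at h1
    have h2 : ¬(w ∈ V1 ∧ w ∈ V2) := fun hh => Finset.disjoint_left.mp hdisj hh.1 hh.2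
    tauto
  have hbip' : ∀ u v, T.Adj u v → ((u ∈ V1) ↔ (v ∉ V1)) := by
    intro u v h
    rcases hbip u v h with ⟨h1, h2⟩ | ⟨h1, h2⟩ <;>
      [skip; skip] <;> have := hside u <;> have := hside v <;> tauto
  have parity : ∀ {x y : W} (p : T.Walk x y), (((x ∈ V1) ↔ (y ∈ V1)) ↔ Even p.length) := by
    intro x y p
    induction p with
    | nil => simp
    | @cons x x' y h q ih =>
      have hxx := hbip' x x' h
      rw [Walk.length_cons, Nat.even_add_one, ← ih]
      tauto
  have hstep : ∀ u v, T.Adj u v → T.dist root u + 1 = T.dist root v ∨ T.dist root v + 1 = T.dist root u := by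
    intro u v h
    obtain ⟨pu, hpu⟩ := hT.isConnected.exists_walk_length_eq_dist root u
    obtain ⟨pv, hpv⟩ := hT.isConnected.exists_walk_length_eq_dist root v
    have e1 : ((root ∈ V1) ↔ (u ∈ V1)) ↔ Even (T.dist root u) := by rw [← hpu]; exact parity pu
    have e2 : ((root ∈ V1) ↔ (v ∈ V1)) ↔ Even (T.dist root v) := by rw [← hpv]; exact parity pv
    have huv := hbip' u v h
    have hne : T.dist root u ≠ T.dist root v := by
      intro heq
      rw [heq] at e1
      tauto
    have h1 : T.dist root v ≤ T.dist root u + 1 := by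
      have := SimpleGraph.dist_le (pu.concat h)
      rwa [Walk.length_concat, hpu] at this
    have h2 : T.dist root u ≤ T.dist root v + 1 := by
      have := SimpleGraph.dist_le (pv.concat h.symm)
      rwa [Walk.length_concat, hpv] at this
    omega
  have hparent : ∀ v, T.dist root v ≠ 0 → ∃ u, T.Adj u v ∧ T.dist root u + 1 = T.dist root v := by
    intro v hv
    obtain ⟨p, hp⟩ := hT.isConnected.exists_walk_length_eq_dist root v
    have hnn : ¬ p.reverse.Nil := by
      rw [Walk.not_nil_iff_lt_length, Walk.length_reverse, hp]
      omega
    obtain ⟨u, h, q, hq⟩ := Walk.not_nil_iff.mp hnn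
    have hql : q.length + 1 = T.dist root v := by
      have := congrArg Walk.length hq
      rw [Walk.length_reverse, Walk.length_cons, hp] at this
      omega
    have h1 : T.dist root u ≤ q.length := by
      have := SimpleGraph.dist_le q.reverse
      rwa [Walk.length_reverse] at this
    refine ⟨u, h.symm, ?_⟩
    rcases hstep u v h.symm with hc | hc
    · exact hc
    · omega
  have huniq : ∀ v u u', T.Adj u v → T.dist root u + 1 = T.dist root v → T.Adj u' v → T.dist root u' + 1 = T.dist root v → u = u' := by
    intro v u u' h1 e1 h2 e2
    have mkpath : ∀ (x : W), T.Adj x v → T.dist root x + 1 = T.dist root v →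
        ∃ q : T.Walk root x, q.IsPath ∧ q.length = T.dist root x := by
      intro x hx ex
      obtain ⟨p, hp⟩ := hT.isConnected.exists_walk_length_eq_dist root x
      refine ⟨p.bypass, p.bypass_isPath, le_antisymm ?_ ?_⟩
      · rw [← hp]; exact Walk.length_bypass_le p
      · exact SimpleGraph.dist_le p.bypass
    obtain ⟨q1, hq1p, hq1l⟩ := mkpath u h1 e1
    obtain ⟨q2, hq2p, hq2l⟩ := mkpath u' h2 e2
    have hvn : ∀ (x : W) (q : T.Walk root x), q.IsPath → q.length + 1 = T.dist root v → v ∉ q.support := by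
      intro x q _ hlen hmem
      have := SimpleGraph.dist_le (q.takeUntil v hmem)
      have := Walk.length_takeUntil_le q hmem
      omega
    have concat_path : ∀ (x : W) (hx : T.Adj x v) (q : T.Walk root x), q.IsPath →
        q.length + 1 = T.dist root v → (q.concat hx).IsPath := by
      intro x hx q hq hlen
      rw [← Walk.isPath_reverse_iff, Walk.reverse_concat]
      refine Walk.IsPath.cons hq.reverse ?_
      rw [Walk.support_reverse, List.mem_reverse]
      exact hvn x q hq hlen
    have hw1 : (q1.concat h1).IsPath := concat_path u h1 q1 hq1p (by omega)
    have hw2 : (q2.concat h2).IsPath := concat_path u' h2 q2 hq2p (by omega)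
    have hpeq := hT.IsAcyclic.path_unique ⟨q1.concat h1, hw1⟩ ⟨q2.concat h2, hw2⟩
    have hweq : q1.concat h1 = q2.concat h2 := congrArg Subtype.val hpeq
    exact (Walk.concat_inj hweq).1
  have key : ∀ (k : ℕ) (S : Finset W),
      (∀ v ∈ S, ∀ u, T.dist root u < T.dist root v → u ∈ S) → S.card = k →
      ∃ f : W → V, Set.InjOn f ↑S ∧ (∀ w ∈ S, w ∈ V1 → f w ∈ A) ∧
        (∀ w ∈ S, w ∈ V2 → f w ∈ B) ∧
        (∀ u ∈ S, ∀ v ∈ S, T.Adj u v → G.Adj (f u) (f v)) := by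
    intro k
    induction k with
    | zero =>
      intro S _ hS
      rw [Finset.card_eq_zero] at hS
      subst hS
      obtain ⟨a0, ha0⟩ : A.Nonempty := Finset.card_pos.mp (by omega)
      exact ⟨fun _ => a0, by simp, by simp, by simp, by simp⟩
    | succ k ih =>
      intro S hdown hcard
      have hSne : S.Nonempty := Finset.card_pos.mp (by omega)
      obtain ⟨v, hvS, hvmax⟩ := S.exists_max_image (T.dist root) hSne
      set S' := S.erase v with hS'
      have hS'card : S'.card = k := by rw [hS', Finset.card_erase_of_mem hvS]; omega
      have hdown' : ∀ x ∈ S', ∀ u, T.dist root u < T.dist root x → u ∈ S' := by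
        intro x hx u hu
        have hxS := Finset.mem_of_mem_erase hx
        refine Finset.mem_erase.mpr ⟨?_, hdown x hxS u hu⟩
        rintro rfl
        exact absurd (lt_of_lt_of_le hu (hvmax x hxS)) (lt_irrefl _)
      obtain ⟨f, hinj, hf1, hf2, hadj⟩ := ih S' hdown' hS'card
      have hmemS' : ∀ x, x ∈ S' ↔ x ∈ S ∧ x ≠ v := by
        intro x; rw [hS', Finset.mem_erase]; tauto
      have hnb : ∀ u ∈ S', T.Adj u v → T.dist root u + 1 = T.dist root v := by
        intro u hu hadj'
        rcases hstep u v hadj' with h | h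
        · exact h
        · have := hvmax u (Finset.mem_of_mem_erase hu); omega
      -- the new vertex's image must avoid previously used images on its side
      have himg1 : ((S' ∩ V1).image f).card + 1 ≤ V1.card ∨ v ∉ V1 := by
        by_cases hv1 : v ∈ V1
        · left
          have hsub : S' ∩ V1 ⊆ V1.erase v := by
            intro x hx
            rw [Finset.mem_inter, hmemS'] at hx
            exact Finset.mem_erase.mpr ⟨hx.1.2, hx.2⟩
          have h1 := Finset.card_image_le (s := S' ∩ V1) (f := f)
          have h2 := Finset.card_le_card hsub
          have h3 : (V1.erase v).card = V1.card - 1 := Finset.card_erase_of_mem hv1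
          have h4 : 1 ≤ V1.card := Finset.card_pos.mpr ⟨v, hv1⟩
          omega
        · right; exact hv1
      have himg2 : ((S' ∩ V2).image f).card + 1 ≤ V2.card ∨ v ∉ V2 := by
        by_cases hv2 : v ∈ V2
        · left
          have hsub : S' ∩ V2 ⊆ V2.erase v := by
            intro x hx
            rw [Finset.mem_inter, hmemS'] at hx
            exact Finset.mem_erase.mpr ⟨hx.1.2, hx.2⟩
          have h1 := Finset.card_image_le (s := S' ∩ V2) (f := f)
          have h2 := Finset.card_le_card hsub
          have h3 : (V2.erase v).card = V2.card - 1 := Finset.card_erase_of_mem hv2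
          have h4 : 1 ≤ V2.card := Finset.card_pos.mpr ⟨v, hv2⟩
          omega
        · right; exact hv2
      -- choose the target finset X on the correct side
      have hchoice : ∃ a : V, (v ∈ V1 → a ∈ A) ∧ (v ∈ V2 → a ∈ B) ∧
          (v ∈ V1 → a ∉ (S' ∩ V1).image f) ∧ (v ∈ V2 → a ∉ (S' ∩ V2).image f) ∧
          (∀ u ∈ S', T.Adj u v → G.Adj (f u) a) := by
        by_cases hdv : T.dist root v = 0
        · -- no neighbours of v inside S'
          have hno : ∀ u ∈ S', ¬ T.Adj u v := by
            intro u hu hadj'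
            have := hnb u hu hadj'
            omega
          by_cases hv1 : v ∈ V1
          · have hY : (((S' ∩ V1).image f).card < A.card) := by
              rcases himg1 with h | h
              · omega
              · exact absurd hv1 h
            obtain ⟨a, ha⟩ : (A \ (S' ∩ V1).image f).Nonempty := by
              rw [← Finset.card_pos]
              have := Finset.le_card_sdiff ((S' ∩ V1).image f) A
              omega
            rw [Finset.mem_sdiff] at ha
            exact ⟨a, fun _ => ha.1, fun hv2 => absurd hv1 ((hside v).mp hv1 hv2 |>.elim),
              fun _ => ha.2, fun hv2 => absurd hv2 ((hside v).mp hv1), fun u hu h => absurd h (hno u hu)⟩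
          · have hv2 : v ∈ V2 := by have := hside v; tauto
            have hY : (((S' ∩ V2).image f).card < B.card) := by
              rcases himg2 with h | h
              · omega
              · exact absurd hv2 h
            obtain ⟨b, hb⟩ : (B \ (S' ∩ V2).image f).Nonempty := by
              rw [← Finset.card_pos]
              have := Finset.le_card_sdiff ((S' ∩ V2).image f) B
              omega
            rw [Finset.mem_sdiff] at hb
            exact ⟨b, fun h => absurd h hv1, fun _ => hb.1, fun h => absurd h hv1,
              fun _ => hb.2, fun u hu h => absurd h (hno u hu)⟩
        · -- v has a parent p, which is its unique neighbour in S'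
          obtain ⟨p, hpadj, hpd⟩ := hparent v hdv
          have hpS : p ∈ S := hdown v hvS p (by omega)
          have hpv : p ≠ v := by rintro rfl; omega
          have hpS' : p ∈ S' := (hmemS' p).mpr ⟨hpS, hpv⟩
          have huniqp : ∀ u ∈ S', T.Adj u v → u = p := by
            intro u hu h
            exact huniq v u p h (hnb u hu h) hpadj hpd
          by_cases hv1 : v ∈ V1
          · have hp2 : p ∈ V2 := by
              rcases hbip p v hpadj with ⟨h1, h2⟩ | ⟨h1, h2⟩
              · exact absurd h2 ((hside v).mp hv1)
              · exact h1
            have hfp : f p ∈ B := hf2 p hpS' hp2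
            have hXcard := hdegB (f p) hfp
            have hY : (((S' ∩ V1).image f).card < (A.filter (G.Adj (f p))).card) := by
              rcases himg1 with h | h
              · omega
              · exact absurd hv1 h
            obtain ⟨a, ha⟩ : ((A.filter (G.Adj (f p))) \ (S' ∩ V1).image f).Nonempty := by
              rw [← Finset.card_pos]
              have := Finset.le_card_sdiff ((S' ∩ V1).image f) (A.filter (G.Adj (f p)))
              omega
            rw [Finset.mem_sdiff, Finset.mem_filter] at ha
            refine ⟨a, fun _ => ha.1.1, fun hv2 => absurd hv2 ((hside v).mp hv1),
              fun _ => ha.2, fun hv2 => absurd hv2 ((hside v).mp hv1), ?_⟩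
            intro u hu h
            rw [huniqp u hu h]
            exact ha.1.2
          · have hv2 : v ∈ V2 := by have := hside v; tauto
            have hp1 : p ∈ V1 := by
              rcases hbip p v hpadj with ⟨h1, h2⟩ | ⟨h1, h2⟩
              · exact h1
              · exact absurd h2 hv1
            have hfp : f p ∈ A := hf1 p hpS' hp1
            have hXcard := hdegA (f p) hfp
            have hY : (((S' ∩ V2).image f).card < (B.filter (G.Adj (f p))).card) := by
              rcases himg2 with h | h
              · omega
              · exact absurd hv2 h
            obtain ⟨b, hb⟩ : ((B.filter (G.Adj (f p))) \ (S' ∩ V2).image f).Nonempty := by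
              rw [← Finset.card_pos]
              have := Finset.le_card_sdiff ((S' ∩ V2).image f) (B.filter (G.Adj (f p)))
              omega
            rw [Finset.mem_sdiff, Finset.mem_filter] at hb
            refine ⟨b, fun h => absurd h hv1, fun _ => hb.1.1,
              fun h => absurd h hv1, fun _ => hb.2, ?_⟩
            intro u hu h
            rw [huniqp u hu h]
            exact hb.1.2
      obtain ⟨a, haA, haB, hnotim1, hnotim2, hadja⟩ := hchoice
      obtain ⟨f', hf'⟩ : ∃ f' : W → V, f' = Function.update f v a := ⟨_, rfl⟩
      have hfeq : ∀ x ∈ S', f' x = f x := by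
        intro x hx
        rw [hf']
        exact Function.update_of_ne ((hmemS' x).mp hx).2 a f
      have hfv : f' v = a := by rw [hf']; exact Function.update_self v a f
      have hvside : v ∈ V1 ∨ v ∈ V2 := by have := hside v; tauto
      have hSins : ∀ x, x ∈ S ↔ x = v ∨ x ∈ S' := by
        intro x
        rw [hmemS']
        by_cases hx : x = v
        · subst hx; tauto
        · tauto
      -- a is distinct from all images of S'
      have hafresh : ∀ x ∈ S', f x ≠ a := by
        intro x hx heq
        have hxside : x ∈ V1 ∨ x ∈ V2 := by have := hside x; tauto
        rcases hxside with hx1 | hx2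
        · have hfx : f x ∈ A := hf1 x hx hx1
          rcases hvside with hv1 | hv2
          · exact hnotim1 hv1 (Finset.mem_image.mpr ⟨x, Finset.mem_inter.mpr ⟨hx, hx1⟩, heq⟩)
          · exact Finset.disjoint_left.mp hABdisj hfx (heq ▸ haB hv2)
        · have hfx : f x ∈ B := hf2 x hx hx2
          rcases hvside with hv1 | hv2
          · exact Finset.disjoint_right.mp hABdisj hfx (heq ▸ haA hv1)
          · exact hnotim2 hv2 (Finset.mem_image.mpr ⟨x, Finset.mem_inter.mpr ⟨hx, hx2⟩, heq⟩)
      refine ⟨f', ?_, ?_, ?_, ?_⟩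
      · intro x hx y hy heq
        rw [Finset.mem_coe, hSins] at hx hy
        rcases hx with rfl | hx <;> rcases hy with rfl | hy
        · rfl
        · rw [hfv, hfeq y hy] at heq
          exact absurd heq.symm (hafresh y hy)
        · rw [hfv, hfeq x hx] at heq
          exact absurd heq (hafresh x hx)
        · rw [hfeq x hx, hfeq y hy] at heq
          exact hinj (Finset.mem_coe.mpr hx) (Finset.mem_coe.mpr hy) heq
      · intro w hw hw1
        rcases (hSins w).mp hw with rfl | hw'
        · rw [hfv]; exact haA hw1
        · rw [hfeq w hw']; exact hf1 w hw' hw1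
      · intro w hw hw2
        rcases (hSins w).mp hw with rfl | hw'
        · rw [hfv]; exact haB hw2
        · rw [hfeq w hw']; exact hf2 w hw' hw2
      · intro u hu w hw hadj'
        rcases (hSins u).mp hu with rfl | hu' <;> rcases (hSins w).mp hw with rfl | hw'
        · exact absurd hadj' (T.irrefl)
        · rw [hfv, hfeq w hw']
          exact (hadja w hw' hadj'.symm).symm
        · rw [hfv, hfeq u hu']
          exact hadja u hu' hadj'
        · rw [hfeq u hu', hfeq w hw']
          exact hadj u hu' w hw' hadj'
  obtain ⟨f, hinj, _, _, hadj⟩ := key (Finset.univ.card) Finset.univ (by simp) rfl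
  refine ⟨f, ?_, fun u v h => hadj u (Finset.mem_univ u) v (Finset.mem_univ v) h⟩
  intro x y hxy
  exact hinj (by simp) (by simp) hxy

lemma bip_min_degree {α β : Type*} [Fintype α] [Fintype β] [DecidableEq α] [DecidableEq β]
    (E : α → β → Bool) (n1 n2 : ℕ)
    (hbig : n2 * (Fintype.card α) + n1 * (Fintype.card β) <
      ((univ ×ˢ univ : Finset (α × β)).filter (fun p => (E p.1 p.2 : Bool))).card) :
    ∃ (A : Finset α) (B : Finset β), A.Nonempty ∧ B.Nonempty ∧
      (∀ a ∈ A, n2 + 1 ≤ (B.filter (fun b => E a b)).card) ∧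
      (∀ b ∈ B, n1 + 1 ≤ (A.filter (fun a => E a b)).card) := by
  classical
  have hrow : ∀ (A : Finset α) (B : Finset β) (x : α), x ∈ A →
      ((A ×ˢ B).filter fun p => (E p.1 p.2 : Bool)).card
        = (((A.erase x) ×ˢ B).filter fun p => (E p.1 p.2 : Bool)).card
          + (B.filter fun b => E x b).card := by
    intro A B x hx
    have h1 : A ×ˢ B = ((A.erase x) ×ˢ B) ∪ ({x} ×ˢ B) := by
      ext ⟨p1, p2⟩
      simp only [Finset.mem_product, Finset.mem_union, Finset.mem_erase, Finset.mem_singleton]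
      by_cases hp : p1 = x
      · subst hp; tauto
      · tauto
    have hdisj2 : Disjoint ((((A.erase x) ×ˢ B)).filter fun p => (E p.1 p.2 : Bool))
        ((({x} ×ˢ B)).filter fun p => (E p.1 p.2 : Bool)) := by
      refine Finset.disjoint_filter_filter ?_
      rw [Finset.disjoint_left]
      rintro ⟨p1, p2⟩ hp hq
      rw [Finset.mem_product, Finset.mem_erase] at hp
      rw [Finset.mem_product, Finset.mem_singleton] at hq
      exact hp.1.1 hq.1
    rw [h1, Finset.filter_union, Finset.card_union_of_disjoint hdisj2]
    congr 1
    have h2 : (({x} ×ˢ B)).filter (fun p => (E p.1 p.2 : Bool))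
        = (B.filter fun b => E x b).image (fun b => (x, b)) := by
      ext ⟨p1, p2⟩
      simp only [Finset.mem_filter, Finset.mem_product, Finset.mem_singleton, Finset.mem_image]
      constructor
      · rintro ⟨⟨rfl, hp2⟩, hE⟩
        exact ⟨p2, ⟨hp2, hE⟩, rfl⟩
      · rintro ⟨b, ⟨hb, hE⟩, heq⟩
        rw [Prod.mk.injEq] at heq
        obtain ⟨rfl, rfl⟩ := heq
        exact ⟨⟨rfl, hb⟩, hE⟩
    rw [h2, Finset.card_image_of_injective _ (fun b1 b2 h => by simpa using h)]
  have hcol : ∀ (A : Finset α) (B : Finset β) (y : β), y ∈ B →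
      ((A ×ˢ B).filter fun p => (E p.1 p.2 : Bool)).card
        = ((A ×ˢ (B.erase y)).filter fun p => (E p.1 p.2 : Bool)).card
          + (A.filter fun a => E a y).card := by
    intro A B y hy
    have h1 : A ×ˢ B = (A ×ˢ (B.erase y)) ∪ (A ×ˢ {y}) := by
      ext ⟨p1, p2⟩
      simp only [Finset.mem_product, Finset.mem_union, Finset.mem_erase, Finset.mem_singleton]
      by_cases hp : p2 = y
      · subst hp; tauto
      · tauto
    have hdisj2 : Disjoint (((A ×ˢ (B.erase y))).filter fun p => (E p.1 p.2 : Bool))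
        (((A ×ˢ {y})).filter fun p => (E p.1 p.2 : Bool)) := by
      refine Finset.disjoint_filter_filter ?_
      rw [Finset.disjoint_left]
      rintro ⟨p1, p2⟩ hp hq
      rw [Finset.mem_product, Finset.mem_erase] at hp
      rw [Finset.mem_product, Finset.mem_singleton] at hq
      exact hp.2.1 hq.2
    rw [h1, Finset.filter_union, Finset.card_union_of_disjoint hdisj2]
    congr 1
    have h2 : ((A ×ˢ {y})).filter (fun p => (E p.1 p.2 : Bool))
        = (A.filter fun a => E a y).image (fun a => (a, y)) := by
      ext ⟨p1, p2⟩
      simp only [Finset.mem_filter, Finset.mem_product, Finset.mem_singleton, Finset.mem_image]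
      constructor
      · rintro ⟨⟨hp1, rfl⟩, hE⟩
        exact ⟨p1, ⟨hp1, hE⟩, rfl⟩
      · rintro ⟨a, ⟨ha, hE⟩, heq⟩
        rw [Prod.mk.injEq] at heq
        obtain ⟨rfl, rfl⟩ := heq
        exact ⟨⟨ha, rfl⟩, hE⟩
    rw [h2, Finset.card_image_of_injective _ (fun b1 b2 h => by simpa using h)]
  set P : Finset α × Finset β → Prop :=
    fun q => n2 * q.1.card + n1 * q.2.card < ((q.1 ×ˢ q.2).filter fun p => (E p.1 p.2 : Bool)).card
    with hP
  have hPuniv : P (univ, univ) := by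
    simpa [hP, Finset.card_univ] using hbig
  have hsne : (Finset.univ.filter P).Nonempty :=
    ⟨(univ, univ), Finset.mem_filter.mpr ⟨Finset.mem_univ _, hPuniv⟩⟩
  obtain ⟨q, hqmem, hqmin⟩ := (Finset.univ.filter P).exists_min_image
    (fun q => q.1.card + q.2.card) hsne
  obtain ⟨A, B⟩ := q
  have hq : P (A, B) := (Finset.mem_filter.mp hqmem).2
  rw [hP] at hq
  simp only at hq
  have hedge : 0 < ((A ×ˢ B).filter fun p => (E p.1 p.2 : Bool)).card := by omega
  obtain ⟨⟨x0, y0⟩, hxy⟩ := Finset.card_pos.mp hedge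
  rw [Finset.mem_filter, Finset.mem_product] at hxy
  refine ⟨A, B, ⟨x0, hxy.1.1⟩, ⟨y0, hxy.1.2⟩, ?_, ?_⟩
  · intro x hxA
    by_contra hdeg
    push_neg at hdeg
    have hsplit := hrow A B x hxA
    have hP' : P (A.erase x, B) := by
      rw [hP]
      simp only
      rw [Finset.card_erase_of_mem hxA]
      have hA1 : 1 ≤ A.card := Finset.card_pos.mpr ⟨x, hxA⟩
      have hn : n2 * (A.card - 1) + n2 = n2 * A.card := by
        obtain ⟨m, hm⟩ := Nat.exists_eq_add_of_le hA1
        rw [hm, Nat.add_sub_cancel_left]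
        ring
      rw [hsplit] at hq
      omega
    have := hqmin (A.erase x, B) (Finset.mem_filter.mpr ⟨Finset.mem_univ _, hP'⟩)
    simp only [Finset.card_erase_of_mem hxA] at this
    have hA1 : 1 ≤ A.card := Finset.card_pos.mpr ⟨x, hxA⟩
    omega
  · intro y hyB
    by_contra hdeg
    push_neg at hdeg
    have hsplit := hcol A B y hyB
    have hP' : P (A, B.erase y) := by
      rw [hP]
      simp only
      rw [Finset.card_erase_of_mem hyB]
      have hB1 : 1 ≤ B.card := Finset.card_pos.mpr ⟨y, hyB⟩
      have hn : n1 * (B.card - 1) + n1 = n1 * B.card := by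
        obtain ⟨m, hm⟩ := Nat.exists_eq_add_of_le hB1
        rw [hm, Nat.add_sub_cancel_left]
        ring
      rw [hsplit] at hq
      omega
    have := hqmin (A, B.erase y) (Finset.mem_filter.mpr ⟨Finset.mem_univ _, hP'⟩)
    simp only [Finset.card_erase_of_mem hyB] at this
    have hB1 : 1 ≤ B.card := Finset.card_pos.mpr ⟨y, hyB⟩
    omega

set_option maxHeartbeats 1000000 in
theorem stmt_8 {W : Type*} [Fintype W] [DecidableEq W] (T : SimpleGraph W) (hT : T.IsTree)
    (V1 V2 : Finset W) (hdisj : Disjoint V1 V2) (hcover : V1 ∪ V2 = Finset.univ)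
    (hbip : ∀ u v, T.Adj u v → (u ∈ V1 ∧ v ∈ V2) ∨ (u ∈ V2 ∧ v ∈ V1))
    (n1 n2 : ℕ) (h1 : V1.card = n1) (h2 : V2.card = n2)
    (r : ℕ) (hr : 1 ≤ r)
    (c : Sym2 (Fin (2 * r * n1 + 1) ⊕ Fin (2 * r * n2 + 1)) → Fin r) :
    HasMonoCopy T (completeBipartiteGraph (Fin (2 * r * n1 + 1)) (Fin (2 * r * n2 + 1))) c := by
  classical
  -- pigeonhole: find a popular color i
  have hsum : ∑ i : Fin r, ((univ ×ˢ univ : Finset (Fin (2*r*n1+1) × Fin (2*r*n2+1))).filter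
      (fun p => c s(Sum.inl p.1, Sum.inr p.2) = i)).card = (2*r*n1+1) * (2*r*n2+1) := by
    rw [← Finset.card_eq_sum_card_fiberwise
      (f := fun p : Fin (2*r*n1+1) × Fin (2*r*n2+1) => c s(Sum.inl p.1, Sum.inr p.2))
      (t := Finset.univ) (fun p _ => Finset.mem_univ _)]
    simp [Finset.card_univ]
  have hex : ∃ i : Fin r, (2*r*n1+1) * (2*r*n2+1) ≤
      r * ((univ ×ˢ univ : Finset (Fin (2*r*n1+1) × Fin (2*r*n2+1))).filter
        (fun p => c s(Sum.inl p.1, Sum.inr p.2) = i)).card := by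
    by_contra hcon
    push_neg at hcon
    have h2' : ∑ i : Fin r, (r * ((univ ×ˢ univ : Finset (Fin (2*r*n1+1) × Fin (2*r*n2+1))).filter
        (fun p => c s(Sum.inl p.1, Sum.inr p.2) = i)).card + 1)
        ≤ ∑ _i : Fin r, (2*r*n1+1) * (2*r*n2+1) :=
      Finset.sum_le_sum (fun i _ => hcon i)
    have hL : ∑ i : Fin r, (r * ((univ ×ˢ univ : Finset (Fin (2*r*n1+1) × Fin (2*r*n2+1))).filter
        (fun p => c s(Sum.inl p.1, Sum.inr p.2) = i)).card + 1)
        = r * ((2*r*n1+1) * (2*r*n2+1)) + r := by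
      rw [Finset.sum_add_distrib, ← Finset.mul_sum, hsum]
      simp
    have hR : ∑ _i : Fin r, (2*r*n1+1) * (2*r*n2+1) = r * ((2*r*n1+1) * (2*r*n2+1)) := by
      simp [Finset.sum_const, Finset.card_univ, mul_comm]
    rw [hL, hR] at h2'
    omega
  obtain ⟨i, hi⟩ := hex
  -- the popular color class, restricted to crossing pairs
  set E : Fin (2*r*n1+1) → Fin (2*r*n2+1) → Bool :=
    fun x y => decide (c s(Sum.inl x, Sum.inr y) = i) with hE
  have hEfilter : ∀ (s : Finset (Fin (2*r*n1+1) × Fin (2*r*n2+1))),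
      s.filter (fun p => (E p.1 p.2 : Bool)) = s.filter (fun p => c s(Sum.inl p.1, Sum.inr p.2) = i) := by
    intro s
    apply Finset.filter_congr
    intro p _
    simp [hE]
  have harith : r * (n2 * (2*r*n1+1) + n1 * (2*r*n2+1)) < (2*r*n1+1) * (2*r*n2+1) := by
    nlinarith [hr]
  have hbig : n2 * (Fintype.card (Fin (2*r*n1+1))) + n1 * (Fintype.card (Fin (2*r*n2+1))) <
      ((univ ×ˢ univ : Finset (Fin (2*r*n1+1) × Fin (2*r*n2+1))).filter
        (fun p => (E p.1 p.2 : Bool))).card := by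
    rw [hEfilter, Fintype.card_fin, Fintype.card_fin]
    have := lt_of_lt_of_le harith hi
    exact Nat.lt_of_mul_lt_mul_left this
  obtain ⟨A, B, hAne, hBne, hdegA, hdegB⟩ := bip_min_degree E n1 n2 hbig
  -- the color-i graph
  set GI : SimpleGraph (Fin (2*r*n1+1) ⊕ Fin (2*r*n2+1)) :=
    SimpleGraph.fromRel (fun u v =>
      (completeBipartiteGraph (Fin (2*r*n1+1)) (Fin (2*r*n2+1))).Adj u v ∧ c s(u, v) = i)
    with hGI
  letI : DecidableRel GI.Adj := Classical.decRel _
  have hGadj : ∀ x y, GI.Adj (Sum.inl x) (Sum.inr y) ↔ c s(Sum.inl x, Sum.inr y) = i := by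
    intro x y
    rw [hGI, SimpleGraph.fromRel_adj]
    constructor
    · rintro ⟨-, ⟨-, hc⟩ | ⟨-, hc⟩⟩
      · exact hc
      · rwa [Sym2.eq_swap] at hc
    · intro hc
      exact ⟨by simp, Or.inl ⟨by simp, hc⟩⟩
  set Afin : Finset (Fin (2*r*n1+1) ⊕ Fin (2*r*n2+1)) := A.image Sum.inl with hAfin
  set Bfin : Finset (Fin (2*r*n1+1) ⊕ Fin (2*r*n2+1)) := B.image Sum.inr with hBfin
  have hABdisj : Disjoint Afin Bfin := by
    rw [Finset.disjoint_left]
    intro w hw hw'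
    rw [hAfin, Finset.mem_image] at hw
    rw [hBfin, Finset.mem_image] at hw'
    obtain ⟨x, -, rfl⟩ := hw
    obtain ⟨y, -, h⟩ := hw'
    simp at h
  have hAcard : V1.card + 1 ≤ Afin.card := by
    rw [hAfin, Finset.card_image_of_injective _ Sum.inl_injective, h1]
    obtain ⟨y, hy⟩ := hBne
    exact le_trans (hdegB y hy) (Finset.card_le_card (Finset.filter_subset _ _))
  have hBcard : V2.card + 1 ≤ Bfin.card := by
    rw [hBfin, Finset.card_image_of_injective _ Sum.inr_injective, h2]
    obtain ⟨x, hx⟩ := hAne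
    exact le_trans (hdegA x hx) (Finset.card_le_card (Finset.filter_subset _ _))
  have hdegA' : ∀ va ∈ Afin, V2.card + 1 ≤ (Bfin.filter (GI.Adj va)).card := by
    intro va hva
    rw [hAfin, Finset.mem_image] at hva
    obtain ⟨x, hx, rfl⟩ := hva
    have heq : Bfin.filter (GI.Adj (Sum.inl x)) = (B.filter (fun y => (E x y : Bool))).image Sum.inr := by
      ext w
      rw [Finset.mem_filter, hBfin, Finset.mem_image, Finset.mem_image]
      constructor
      · rintro ⟨⟨y, hy, rfl⟩, hadj⟩
        exact ⟨y, Finset.mem_filter.mpr ⟨hy, by simp [hE, (hGadj x y).mp hadj]⟩, rfl⟩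
      · rintro ⟨y, hy, rfl⟩
        rw [Finset.mem_filter] at hy
        refine ⟨⟨y, hy.1, rfl⟩, (hGadj x y).mpr ?_⟩
        simpa [hE] using hy.2
    rw [heq, Finset.card_image_of_injective _ Sum.inr_injective, h2]
    exact hdegA x hx
  have hdegB' : ∀ vb ∈ Bfin, V1.card + 1 ≤ (Afin.filter (GI.Adj vb)).card := by
    intro vb hvb
    rw [hBfin, Finset.mem_image] at hvb
    obtain ⟨y, hy, rfl⟩ := hvb
    have heq : Afin.filter (GI.Adj (Sum.inr y)) = (A.filter (fun x => (E x y : Bool))).image Sum.inl := by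
      ext w
      rw [Finset.mem_filter, hAfin, Finset.mem_image, Finset.mem_image]
      constructor
      · rintro ⟨⟨x, hx, rfl⟩, hadj⟩
        exact ⟨x, Finset.mem_filter.mpr ⟨hx, by simp [hE, (hGadj x y).mp hadj.symm]⟩, rfl⟩
      · rintro ⟨x, hx, rfl⟩
        rw [Finset.mem_filter] at hx
        refine ⟨⟨x, hx.1, rfl⟩, ((hGadj x y).mpr ?_).symm⟩
        simpa [hE] using hx.2
    rw [heq, Finset.card_image_of_injective _ Sum.inl_injective, h1]
    exact hdegB y hy
  obtain ⟨f, hinj, hmap⟩ := tree_embed T hT V1 V2 hdisj hcover hbip GI Afin Bfin hABdisj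
    hAcard hBcard hdegA' hdegB'
  exact ⟨i, ⟨f, fun {u v} h => hmap u v h⟩, hinj⟩
end

section
/- For all integers n ≥ m ≥ 1 and r ≥ 2, the r-color size-Ramsey number of the double star S_{n,m} satisfies R̂_r(S_{n,m}) ≤ 4r^2*n*m + 2r*(n+m) + 1. -/
open SimpleGraph Finset

/-- The double star `S_{n,m}`: the tree obtained by joining the centers of
`K_{1,n}` and `K_{1,m}` by an edge.  Here `Sum.inl 0` is the center of degree
`n + 1` and `Sum.inr 0` is the center of degree `m + 1`. -/
def doubleStar (n m : ℕ) : SimpleGraph (Fin (m + 1) ⊕ Fin (n + 1)) :=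
  SimpleGraph.fromRel fun u v =>
    match u, v with
    | Sum.inl a, Sum.inr b => a = 0 ∨ b = 0
    | _, _ => False

private lemma card_filter_prod_fst {α β : Type*} [Fintype α] [Fintype β] [DecidableEq α]
    [DecidableEq β] (p : α × β → Prop) [DecidablePred p] :
    (univ.filter p).card ≤ ∑ x : α, (univ.filter fun y => p (x, y)).card := by
  classical
  have hsub : univ.filter p ⊆ univ.biUnion (fun x : α =>
      (univ.filter fun y => p (x, y)).map
        ⟨fun y => (x, y), fun y1 y2 h => congrArg Prod.snd h⟩) := by
    intro q hq
    obtain ⟨x, y⟩ := q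
    simp only [mem_filter, mem_univ, true_and] at hq
    rw [Finset.mem_biUnion]
    refine ⟨x, mem_univ _, ?_⟩
    rw [Finset.mem_map]
    exact ⟨y, by simp [hq], rfl⟩
  calc (univ.filter p).card ≤ _ := Finset.card_le_card hsub
    _ ≤ ∑ x : α, ((univ.filter fun y => p (x, y)).map
        ⟨fun y => (x, y), fun y1 y2 h => congrArg Prod.snd h⟩).card := Finset.card_biUnion_le
    _ = ∑ x : α, (univ.filter fun y => p (x, y)).card := by simp

private lemma card_filter_prod_snd {α β : Type*} [Fintype α] [Fintype β] [DecidableEq α]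
    [DecidableEq β] (p : α × β → Prop) [DecidablePred p] :
    (univ.filter p).card ≤ ∑ y : β, (univ.filter fun x => p (x, y)).card := by
  classical
  have hsub : univ.filter p ⊆ univ.biUnion (fun y : β =>
      (univ.filter fun x => p (x, y)).map
        ⟨fun x => (x, y), fun x1 x2 h => congrArg Prod.fst h⟩) := by
    intro q hq
    obtain ⟨x, y⟩ := q
    simp only [mem_filter, mem_univ, true_and] at hq
    rw [Finset.mem_biUnion]
    refine ⟨y, mem_univ _, ?_⟩
    rw [Finset.mem_map]
    exact ⟨x, by simp [hq], rfl⟩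
  calc (univ.filter p).card ≤ _ := Finset.card_le_card hsub
    _ ≤ ∑ y : β, ((univ.filter fun x => p (x, y)).map
        ⟨fun x => (x, y), fun x1 x2 h => congrArg Prod.fst h⟩).card := Finset.card_biUnion_le
    _ = ∑ y : β, (univ.filter fun x => p (x, y)).card := by simp

theorem stmt_12 (n m r : ℕ) (hnm : m ≤ n) (hm : 1 ≤ m) (hr : 2 ≤ r) :
    ∃ (N : ℕ) (G : SimpleGraph (Fin N)),
      G.edgeSet.ncard ≤ 4 * r ^ 2 * n * m + 2 * r * (n + m) + 1 ∧
      ∀ c : Sym2 (Fin N) → Fin r, HasMonoCopy (doubleStar n m) G c := by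
  classical
  set a := 2 * r * n + 1 with ha
  set b := 2 * r * m + 1 with hb
  set G : SimpleGraph (Fin (a + b)) :=
    SimpleGraph.fromRel (fun u v => (u : ℕ) < a ∧ a ≤ (v : ℕ)) with hG
  have hadj : ∀ u v : Fin (a + b), G.Adj u v ↔
      u ≠ v ∧ (((u : ℕ) < a ∧ a ≤ (v : ℕ)) ∨ ((v : ℕ) < a ∧ a ≤ (u : ℕ))) := by
    intro u v
    rw [hG]
    exact SimpleGraph.fromRel_adj _ u v
  refine ⟨a + b, G, ?_, ?_⟩
  · -- edge count bound
    set g : Fin a × Fin b → Sym2 (Fin (a + b)) :=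
      fun p => s(Fin.castAdd b p.1, Fin.natAdd a p.2) with hg
    have hsub : G.edgeSet ⊆ Set.range g := by
      intro e he
      induction e using Sym2.ind with
      | _ u v =>
        rw [SimpleGraph.mem_edgeSet, hadj] at he
        obtain ⟨hne, h | h⟩ := he
        · refine ⟨(⟨(u : ℕ), h.1⟩, ⟨(v : ℕ) - a, by have := v.isLt; omega⟩), ?_⟩
          have e1 : Fin.castAdd b (⟨(u : ℕ), h.1⟩ : Fin a) = u := by
            apply Fin.ext; simp
          have e2 : Fin.natAdd a (⟨(v : ℕ) - a, by have := v.isLt; omega⟩ : Fin b) = v := by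
            apply Fin.ext; simp; omega
          simp only [hg, e1, e2]
        · refine ⟨(⟨(v : ℕ), h.1⟩, ⟨(u : ℕ) - a, by have := u.isLt; omega⟩), ?_⟩
          have e1 : Fin.castAdd b (⟨(v : ℕ), h.1⟩ : Fin a) = v := by
            apply Fin.ext; simp
          have e2 : Fin.natAdd a (⟨(u : ℕ) - a, by have := u.isLt; omega⟩ : Fin b) = u := by
            apply Fin.ext; simp; omega
          simp only [hg, e1, e2]
          exact Sym2.eq_swap
    have h1 : G.edgeSet.ncard ≤ (Set.range g).ncard :=
      Set.ncard_le_ncard hsub (Set.finite_range g)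
    have h2 : (Set.range g).ncard ≤ a * b := by
      rw [← Set.image_univ]
      calc (g '' Set.univ).ncard ≤ (Set.univ : Set (Fin a × Fin b)).ncard :=
            Set.ncard_image_le Set.finite_univ
        _ = a * b := by
            rw [Set.ncard_univ, Nat.card_eq_fintype_card]
            simp
    have h3 : a * b = 4 * r ^ 2 * n * m + 2 * r * (n + m) + 1 := by
      rw [ha, hb]; ring
    omega
  · -- Ramsey property
    intro c
    by_contra hno
    set D : Fin (a + b) → Fin r → Finset (Fin (a + b)) :=
      fun u i => univ.filter (fun w => G.Adj u w ∧ c s(u, w) = i) with hD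
    have hDmem : ∀ u i w, w ∈ D u i ↔ G.Adj u w ∧ c s(u, w) = i := by
      intro u i w; simp [hD]
    have hside : ∀ u v : Fin (a + b), G.Adj u v → (u : ℕ) < a → a ≤ (v : ℕ) := by
      intro u v h hu
      rcases (hadj u v).1 h with ⟨_, h1 | h1⟩
      · exact h1.2
      · omega
    have hside' : ∀ u v : Fin (a + b), G.Adj u v → a ≤ (u : ℕ) → (v : ℕ) < a := by
      intro u v h hu
      rcases (hadj u v).1 h with ⟨_, h1 | h1⟩
      · omega
      · exact h1.1
    -- the copy-building step
    have hbuild : ∀ (u v : Fin (a + b)) (i : Fin r), (u : ℕ) < a → a ≤ (v : ℕ) →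
        G.Adj u v → c s(u, v) = i → m + 1 ≤ (D u i).card → n + 1 ≤ (D v i).card → False := by
      intro u v i hu hv huv hc hcu hcv
      have hvu : G.Adj v u := huv.symm
      have hvmem : v ∈ D u i := (hDmem u i v).2 ⟨huv, hc⟩
      have humem : u ∈ D v i := (hDmem v i u).2 ⟨hvu, by rw [Sym2.eq_swap]; exact hc⟩
      have hUc : m ≤ ((D u i).erase v).card := by
        rw [Finset.card_erase_of_mem hvmem]; omega
      have hVc : n ≤ ((D v i).erase u).card := by
        rw [Finset.card_erase_of_mem humem]; omega
      obtain ⟨tU, htUsub, htU⟩ := Finset.exists_subset_card_eq hUc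
      obtain ⟨tV, htVsub, htV⟩ := Finset.exists_subset_card_eq hVc
      have htUfact : ∀ w ∈ tU, w ≠ v ∧ G.Adj u w ∧ c s(u, w) = i ∧ a ≤ (w : ℕ) := by
        intro w hw
        have h' := htUsub hw
        rw [Finset.mem_erase, hDmem] at h'
        exact ⟨h'.1, h'.2.1, h'.2.2, hside u w h'.2.1 hu⟩
      have htVfact : ∀ w ∈ tV, w ≠ u ∧ G.Adj v w ∧ c s(v, w) = i ∧ (w : ℕ) < a := by
        intro w hw
        have h' := htVsub hw
        rw [Finset.mem_erase, hDmem] at h'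
        exact ⟨h'.1, h'.2.1, h'.2.2, hside' v w h'.2.1 hv⟩
      set eU : Fin m → Fin (a + b) := fun j => ((tU.orderIsoOfFin htU j : tU) : Fin (a + b))
        with heU
      set eV : Fin n → Fin (a + b) := fun k => ((tV.orderIsoOfFin htV k : tV) : Fin (a + b))
        with heV
      have heUmem : ∀ j, eU j ∈ tU := fun j => (tU.orderIsoOfFin htU j).2
      have heVmem : ∀ k, eV k ∈ tV := fun k => (tV.orderIsoOfFin htV k).2
      have heUinj : Function.Injective eU := by
        intro j1 j2 h
        exact (tU.orderIsoOfFin htU).injective (Subtype.coe_injective h)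
      have heVinj : Function.Injective eV := by
        intro k1 k2 h
        exact (tV.orderIsoOfFin htV).injective (Subtype.coe_injective h)
      set φ : (Fin (m + 1) ⊕ Fin (n + 1)) → Fin (a + b) :=
        Sum.elim (Fin.cases v eU) (Fin.cases u eV) with hφ
      set H : SimpleGraph (Fin (a + b)) :=
        SimpleGraph.fromRel (fun x y => G.Adj x y ∧ c s(x, y) = i) with hH
      have hHadj : ∀ x y, G.Adj x y → c s(x, y) = i → H.Adj x y := by
        intro x y h1 h2
        rw [hH, SimpleGraph.fromRel_adj]
        exact ⟨h1.ne, Or.inl ⟨h1, h2⟩⟩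
      have hUside : ∀ j, a ≤ (eU j : ℕ) := fun j => (htUfact _ (heUmem j)).2.2.2
      have hUne : ∀ j, eU j ≠ v := fun j => (htUfact _ (heUmem j)).1
      have hVside : ∀ k, (eV k : ℕ) < a := fun k => (htVfact _ (heVmem k)).2.2.2
      have hVne : ∀ k, eV k ≠ u := fun k => (htVfact _ (heVmem k)).1
      have hmap : ∀ p q, (doubleStar n m).Adj p q → H.Adj (φ p) (φ q) := by
        intro p q hpq
        rw [doubleStar, SimpleGraph.fromRel_adj] at hpq
        obtain ⟨hne, hrel⟩ := hpq
        rcases p with j | k <;> rcases q with j' | k'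
        · exact absurd hrel (by simp)
        · have hjk : j = 0 ∨ k' = 0 := by
            rcases hrel with h | h
            · exact h
            · exact h.elim
          rcases Fin.eq_zero_or_eq_succ j with rfl | ⟨j0, rfl⟩ <;>
            rcases Fin.eq_zero_or_eq_succ k' with rfl | ⟨k0, rfl⟩
          · simp only [hφ, Sum.elim_inl, Sum.elim_inr, Fin.cases_zero]
            exact (hHadj u v huv hc).symm
          · simp only [hφ, Sum.elim_inl, Sum.elim_inr, Fin.cases_zero, Fin.cases_succ]
            exact hHadj v (eV k0) (htVfact _ (heVmem k0)).2.1 (htVfact _ (heVmem k0)).2.2.1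
          · simp only [hφ, Sum.elim_inl, Sum.elim_inr, Fin.cases_zero, Fin.cases_succ]
            exact (hHadj u (eU j0) (htUfact _ (heUmem j0)).2.1
              (htUfact _ (heUmem j0)).2.2.1).symm
          · rcases hjk with h | h <;> exact absurd h (Fin.succ_ne_zero _)
        · have hjk : j' = 0 ∨ k = 0 := by
            rcases hrel with h | h
            · exact h.elim
            · exact h
          rcases Fin.eq_zero_or_eq_succ j' with rfl | ⟨j0, rfl⟩ <;>
            rcases Fin.eq_zero_or_eq_succ k with rfl | ⟨k0, rfl⟩
          · simp only [hφ, Sum.elim_inl, Sum.elim_inr, Fin.cases_zero]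
            exact hHadj u v huv hc
          · simp only [hφ, Sum.elim_inl, Sum.elim_inr, Fin.cases_zero, Fin.cases_succ]
            exact (hHadj v (eV k0) (htVfact _ (heVmem k0)).2.1
              (htVfact _ (heVmem k0)).2.2.1).symm
          · simp only [hφ, Sum.elim_inl, Sum.elim_inr, Fin.cases_zero, Fin.cases_succ]
            exact hHadj u (eU j0) (htUfact _ (heUmem j0)).2.1 (htUfact _ (heUmem j0)).2.2.1
          · rcases hjk with h | h <;> exact absurd h (Fin.succ_ne_zero _)
        · exact absurd hrel (by simp)
      have hinj : Function.Injective φ := by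
        intro p q h
        rcases p with j | k <;> rcases q with j' | k'
        · rcases Fin.eq_zero_or_eq_succ j with rfl | ⟨j0, rfl⟩ <;>
            rcases Fin.eq_zero_or_eq_succ j' with rfl | ⟨j0', rfl⟩ <;>
            simp only [hφ, Sum.elim_inl, Fin.cases_zero, Fin.cases_succ] at h
          · rfl
          · exact absurd h.symm (hUne j0')
          · exact absurd h (hUne j0)
          · rw [heUinj h]
        · rcases Fin.eq_zero_or_eq_succ j with rfl | ⟨j0, rfl⟩ <;>
            rcases Fin.eq_zero_or_eq_succ k' with rfl | ⟨k0, rfl⟩ <;>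
            simp only [hφ, Sum.elim_inl, Sum.elim_inr, Fin.cases_zero, Fin.cases_succ] at h
          · have := congrArg Fin.val h; omega
          · have := congrArg Fin.val h; have := hVside k0; omega
          · have := congrArg Fin.val h; have := hUside j0; omega
          · have := congrArg Fin.val h; have := hUside j0; have := hVside k0; omega
        · rcases Fin.eq_zero_or_eq_succ k with rfl | ⟨k0, rfl⟩ <;>
            rcases Fin.eq_zero_or_eq_succ j' with rfl | ⟨j0, rfl⟩ <;>
            simp only [hφ, Sum.elim_inl, Sum.elim_inr, Fin.cases_zero, Fin.cases_succ] at h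
          · have := congrArg Fin.val h; omega
          · have := congrArg Fin.val h; have := hUside j0; omega
          · have := congrArg Fin.val h; have := hVside k0; omega
          · have := congrArg Fin.val h; have := hUside j0; have := hVside k0; omega
        · rcases Fin.eq_zero_or_eq_succ k with rfl | ⟨k0, rfl⟩ <;>
            rcases Fin.eq_zero_or_eq_succ k' with rfl | ⟨k0', rfl⟩ <;>
            simp only [hφ, Sum.elim_inr, Fin.cases_zero, Fin.cases_succ] at h
          · rfl
          · exact absurd h.symm (hVne k0')
          · exact absurd h (hVne k0)
          · rw [heVinj h]
      exact hno ⟨i, ⟨⟨φ, fun h => hmap _ _ h⟩, hinj⟩⟩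
    -- counting step
    set U : Fin a → Fin (a + b) := fun x => Fin.castAdd b x with hUdef
    set V : Fin b → Fin (a + b) := fun y => Fin.natAdd a y with hVdef
    have hUval : ∀ x, ((U x : Fin (a + b)) : ℕ) = (x : ℕ) := fun x => rfl
    have hVval : ∀ y, ((V y : Fin (a + b)) : ℕ) = a + (y : ℕ) := fun y => rfl
    have hUinj : Function.Injective U := by
      intro x1 x2 h
      apply Fin.ext
      have := congrArg Fin.val h
      rwa [hUval, hUval] at this
    have hVinj : Function.Injective V := by
      intro y1 y2 h
      apply Fin.ext
      have := congrArg Fin.val h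
      rw [hVval, hVval] at this
      omega
    have hadjUV : ∀ x y, G.Adj (U x) (V y) := by
      intro x y
      rw [hadj]
      refine ⟨?_, Or.inl ⟨?_, ?_⟩⟩
      · intro hEq
        have := congrArg Fin.val hEq
        rw [hUval, hVval] at this
        have := x.isLt
        omega
      · rw [hUval]; exact x.isLt
      · rw [hVval]; omega
    have hbad : ∀ x y,
        (D (U x) (c s(U x, V y))).card ≤ m ∨ (D (V y) (c s(U x, V y))).card ≤ n := by
      intro x y
      by_contra hcon
      push_neg at hcon
      exact hbuild (U x) (V y) _ (by rw [hUval]; exact x.isLt) (by rw [hVval]; omega)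
        (hadjUV x y) rfl (by omega) (by omega)
    set p1 : Fin a × Fin b → Prop :=
      fun q => (D (U q.1) (c s(U q.1, V q.2))).card ≤ m with hp1
    set p2 : Fin a × Fin b → Prop :=
      fun q => (D (V q.2) (c s(U q.1, V q.2))).card ≤ n with hp2
    have hcover : (univ : Finset (Fin a × Fin b)) ⊆ univ.filter p1 ∪ univ.filter p2 := by
      intro q _
      rcases hbad q.1 q.2 with h | h
      · exact Finset.mem_union_left _ (Finset.mem_filter.2 ⟨Finset.mem_univ _, h⟩)
      · exact Finset.mem_union_right _ (Finset.mem_filter.2 ⟨Finset.mem_univ _, h⟩)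
    have hcard : a * b ≤ (univ.filter p1).card + (univ.filter p2).card := by
      calc a * b = (univ : Finset (Fin a × Fin b)).card := by simp
        _ ≤ (univ.filter p1 ∪ univ.filter p2).card := Finset.card_le_card hcover
        _ ≤ _ := Finset.card_union_le _ _
    have hfib1 : ∀ x : Fin a, (univ.filter fun y : Fin b => p1 (x, y)).card ≤ r * m := by
      intro x
      have hsub2 : (univ.filter fun y : Fin b => p1 (x, y)) ⊆
          (univ : Finset (Fin r)).biUnion (fun i => univ.filter fun y : Fin b =>
            c s(U x, V y) = i ∧ (D (U x) i).card ≤ m) := by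
        intro y hy
        rw [Finset.mem_filter] at hy
        exact Finset.mem_biUnion.2 ⟨c s(U x, V y), Finset.mem_univ _,
          Finset.mem_filter.2 ⟨Finset.mem_univ _, rfl, hy.2⟩⟩
      calc _ ≤ _ := Finset.card_le_card hsub2
        _ ≤ ∑ i : Fin r, (univ.filter fun y : Fin b =>
              c s(U x, V y) = i ∧ (D (U x) i).card ≤ m).card := Finset.card_biUnion_le
        _ ≤ ∑ _i : Fin r, m := by
            apply Finset.sum_le_sum
            intro i _
            by_cases hdm : (D (U x) i).card ≤ m
            · calc (univ.filter fun y : Fin b =>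
                    c s(U x, V y) = i ∧ (D (U x) i).card ≤ m).card
                  = ((univ.filter fun y : Fin b =>
                    c s(U x, V y) = i ∧ (D (U x) i).card ≤ m).image V).card :=
                    (Finset.card_image_of_injective _ hVinj).symm
                _ ≤ (D (U x) i).card := by
                    apply Finset.card_le_card
                    intro w hw
                    rw [Finset.mem_image] at hw
                    obtain ⟨y, hy, rfl⟩ := hw
                    rw [Finset.mem_filter] at hy
                    exact (hDmem _ _ _).2 ⟨hadjUV x y, hy.2.1⟩
                _ ≤ m := hdm
            · have hemp : (univ.filter fun y : Fin b =>
                  c s(U x, V y) = i ∧ (D (U x) i).card ≤ m) = ∅ := by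
                apply Finset.filter_false_of_mem
                intro y _ hy
                exact hdm hy.2
              rw [hemp]; simp
        _ = r * m := by simp [mul_comm]
    have hfib2 : ∀ y : Fin b, (univ.filter fun x : Fin a => p2 (x, y)).card ≤ r * n := by
      intro y
      have hsub2 : (univ.filter fun x : Fin a => p2 (x, y)) ⊆
          (univ : Finset (Fin r)).biUnion (fun i => univ.filter fun x : Fin a =>
            c s(U x, V y) = i ∧ (D (V y) i).card ≤ n) := by
        intro x hx
        rw [Finset.mem_filter] at hx
        exact Finset.mem_biUnion.2 ⟨c s(U x, V y), Finset.mem_univ _,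
          Finset.mem_filter.2 ⟨Finset.mem_univ _, rfl, hx.2⟩⟩
      calc _ ≤ _ := Finset.card_le_card hsub2
        _ ≤ ∑ i : Fin r, (univ.filter fun x : Fin a =>
              c s(U x, V y) = i ∧ (D (V y) i).card ≤ n).card := Finset.card_biUnion_le
        _ ≤ ∑ _i : Fin r, n := by
            apply Finset.sum_le_sum
            intro i _
            by_cases hdn : (D (V y) i).card ≤ n
            · calc (univ.filter fun x : Fin a =>
                    c s(U x, V y) = i ∧ (D (V y) i).card ≤ n).card
                  = ((univ.filter fun x : Fin a =>
                    c s(U x, V y) = i ∧ (D (V y) i).card ≤ n).image U).card :=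
                    (Finset.card_image_of_injective _ hUinj).symm
                _ ≤ (D (V y) i).card := by
                    apply Finset.card_le_card
                    intro w hw
                    rw [Finset.mem_image] at hw
                    obtain ⟨x, hx, rfl⟩ := hw
                    rw [Finset.mem_filter] at hx
                    refine (hDmem _ _ _).2 ⟨(hadjUV x y).symm, ?_⟩
                    rw [Sym2.eq_swap]
                    exact hx.2.1
                _ ≤ n := hdn
            · have hemp : (univ.filter fun x : Fin a =>
                  c s(U x, V y) = i ∧ (D (V y) i).card ≤ n) = ∅ := by
                apply Finset.filter_false_of_mem
                intro x _ hx
                exact hdn hx.2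
              rw [hemp]; simp
        _ = r * n := by simp [mul_comm]
    have h1 : (univ.filter p1).card ≤ a * (r * m) := by
      calc (univ.filter p1).card
          ≤ ∑ x : Fin a, (univ.filter fun y : Fin b => p1 (x, y)).card :=
            card_filter_prod_fst p1
        _ ≤ ∑ _x : Fin a, r * m := Finset.sum_le_sum (fun x _ => hfib1 x)
        _ = a * (r * m) := by simp [mul_comm]
    have h2 : (univ.filter p2).card ≤ b * (r * n) := by
      calc (univ.filter p2).card
          ≤ ∑ y : Fin b, (univ.filter fun x : Fin a => p2 (x, y)).card :=
            card_filter_prod_snd p2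
        _ ≤ ∑ _y : Fin b, r * n := Finset.sum_le_sum (fun y _ => hfib2 y)
        _ = b * (r * n) := by simp [mul_comm]
    have hfinal : a * b ≤ a * (r * m) + b * (r * n) :=
      le_trans hcard (Nat.add_le_add h1 h2)
    rw [ha, hb] at hfinal
    nlinarith [hfinal]
end

section
/- For all integers n ≥ m ≥ 1, the 2-color size-Ramsey number of the double star S_{n,m} satisfies R̂(S_{n,m}) ≥ (n+1)(m+1)/2 + (m+1)^2/2. -/
open SimpleGraph Finset

lemma ncard_nbr_le_deg_of_copy {W V : Type*} [Fintype V] {H : SimpleGraph W}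
    {G : SimpleGraph V} (φ : H →g G) (hφ : Function.Injective φ) (w : W) :
    (H.neighborSet w).ncard ≤ deg G (φ w) := by
  have h1 : φ '' H.neighborSet w ⊆ G.neighborSet (φ w) := by
    rintro _ ⟨u, hu, rfl⟩
    exact φ.map_adj hu
  calc (H.neighborSet w).ncard = (φ '' H.neighborSet w).ncard :=
        (Set.ncard_image_of_injective _ hφ).symm
    _ ≤ (G.neighborSet (φ w)).ncard := Set.ncard_le_ncard h1 (Set.toFinite _)

lemma deg_le_of_le {V : Type*} [Fintype V] {G₁ G₂ : SimpleGraph V} (h : G₁ ≤ G₂) (v : V) :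
    deg G₁ v ≤ deg G₂ v :=
  Set.ncard_le_ncard (fun _ hu => h hu) (Set.toFinite _)

lemma ds_nbr_inl (n m : ℕ) :
    (doubleStar n m).neighborSet (Sum.inl 0) = Set.range Sum.inr := by
  ext v
  cases v with
  | inl a => simp [doubleStar]
  | inr b => simp [doubleStar]

lemma ds_nbr_inr (n m : ℕ) :
    (doubleStar n m).neighborSet (Sum.inr 0) = Set.range Sum.inl := by
  ext v
  cases v with
  | inl a => simp [doubleStar]
  | inr b => simp [doubleStar]

lemma ds_adj_inl (n m : ℕ) (a : Fin (m + 1)) :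
    (doubleStar n m).Adj (Sum.inl a) (Sum.inr 0) := by
  simp [doubleStar]

lemma ds_adj_inr (n m : ℕ) (b : Fin (n + 1)) :
    (doubleStar n m).Adj (Sum.inl 0) (Sum.inr b) := by
  simp [doubleStar]


lemma stmt_14_aux {V : Type*} [Fintype V] (n m : ℕ) (hnm : m ≤ n) (hm : 1 ≤ m)
    (G G' : SimpleGraph V) (f : V → Bool) (hfdef : ∀ v, f v = decide (deg G v ≤ m))
    (i : Fin 2) (hle : G' ≤ G)
    (hcolor : ∀ u v : V, G'.Adj u v →
      (if ((s(u, v) : Sym2 V).map f).IsDiag then (0 : Fin 2) else 1) = i)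
    (φ : doubleStar n m →g G') (hφ : Function.Injective φ)
    (hE : 2 * G.edgeSet.ncard < (n + 1) * (m + 1) + (m + 1) ^ 2) : False := by
  classical
  -- the images of the two centers have large degree in G
  have hdeg1 : n + 1 ≤ deg G (φ (Sum.inl 0)) := by
    have := ncard_nbr_le_deg_of_copy φ hφ (Sum.inl 0)
    rw [ds_nbr_inl] at this
    have hr : (Set.range (Sum.inr : Fin (n+1) → Fin (m+1) ⊕ Fin (n+1))).ncard = n + 1 := by
      rw [← Set.image_univ, Set.ncard_image_of_injective _ Sum.inr_injective, Set.ncard_univ]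
      simp
    have h2 := deg_le_of_le hle (φ (Sum.inl 0))
    omega
  have hdeg2 : m + 1 ≤ deg G (φ (Sum.inr 0)) := by
    have := ncard_nbr_le_deg_of_copy φ hφ (Sum.inr 0)
    rw [ds_nbr_inr] at this
    have hr : (Set.range (Sum.inl : Fin (m+1) → Fin (m+1) ⊕ Fin (n+1))).ncard = m + 1 := by
      rw [← Set.image_univ, Set.ncard_image_of_injective _ Sum.inl_injective, Set.ncard_univ]
      simp
    have h2 := deg_le_of_le hle (φ (Sum.inr 0))
    omega
  have hf1 : f (φ (Sum.inl 0)) = false := by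
    rw [hfdef]; simp only [decide_eq_false_iff_not, not_le]; omega
  have hf2 : f (φ (Sum.inr 0)) = false := by
    rw [hfdef]; simp only [decide_eq_false_iff_not, not_le]; omega
  have hcadj : G'.Adj (φ (Sum.inl 0)) (φ (Sum.inr 0)) := φ.map_adj (ds_adj_inr n m 0)
  fin_cases i
  · -- blue : edges within a color class, so whole copy lies in Y
    have hmono : ∀ u v : V, G'.Adj u v → f u = f v := by
      intro u v huv
      have := hcolor u v huv
      by_contra hne
      rw [if_neg (by simpa [Sym2.map_pair_eq, Sym2.mk_isDiag_iff] using hne)] at this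
      exact absurd this (by decide)
    have hY : ∀ w : Fin (m+1) ⊕ Fin (n+1), f (φ w) = false := by
      rintro (a | b)
      · rw [hmono _ _ (φ.map_adj (ds_adj_inl n m a)), hf2]
      · rw [← hmono _ _ (φ.map_adj (ds_adj_inr n m b)), hf1]
    -- Y has at least n + m + 2 vertices, each of degree ≥ m + 1
    set Y : Finset V := Finset.univ.filter (fun v => f v = false) with hYdef
    have hrange : ∀ w, φ w ∈ Y := by
      intro w
      simp [hYdef, hY w]
    have hcard : n + m + 2 ≤ Y.card := by
      have := Finset.card_le_card_of_injOn (s := Finset.univ) φ (fun w _ => hrange w)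
        (fun a _ b _ h => hφ h)
      simp only [Finset.card_univ, Fintype.card_sum, Fintype.card_fin] at this
      omega
    have hdegY : ∀ v ∈ Y, m + 1 ≤ G.degree v := by
      intro v hv
      have hvf : f v = false := by simpa [hYdef] using hv
      rw [hfdef] at hvf
      have h1 : ¬ deg G v ≤ m := by simpa using hvf
      have h2 : deg G v = G.degree v := by
        rw [deg, Set.ncard_eq_toFinset_card', Set.toFinset_card, card_neighborSet_eq_degree]
      omega
    have hsum : (n + m + 2) * (m + 1) ≤ ∑ v, G.degree v := by
      calc (n + m + 2) * (m + 1) ≤ Y.card * (m + 1) := by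
            exact Nat.mul_le_mul_right _ hcard
        _ = ∑ _v ∈ Y, (m + 1) := by rw [Finset.sum_const, smul_eq_mul]
        _ ≤ ∑ v ∈ Y, G.degree v := Finset.sum_le_sum hdegY
        _ ≤ ∑ v, G.degree v := Finset.sum_le_sum_of_subset (Finset.subset_univ Y)
    rw [G.sum_degrees_eq_twice_card_edges] at hsum
    have hecard : G.edgeSet.ncard = G.edgeFinset.card := by
      rw [Set.ncard_eq_toFinset_card', Set.toFinset_card, ← edgeFinset_card]
    rw [← hecard] at hsum
    nlinarith
  · -- red : cross edges only, but both centers lie in Y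
    have := hcolor _ _ hcadj
    rw [if_pos (by simp [Sym2.map_pair_eq, Sym2.mk_isDiag_iff, hf1, hf2])] at this
    exact absurd this (by decide)

theorem stmt_14 (n m : ℕ) (hnm : m ≤ n) (hm : 1 ≤ m)
    {V : Type*} [Fintype V] (G : SimpleGraph V)
    (hE : 2 * G.edgeSet.ncard < (n + 1) * (m + 1) + (m + 1) ^ 2) :
    ∃ c : Sym2 V → Fin 2, ¬ HasMonoCopy (doubleStar n m) G c := by
  classical
  refine ⟨fun e => if (e.map (fun v => decide (deg G v ≤ m))).IsDiag then 0 else 1, ?_⟩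
  rintro ⟨i, φ, hφ⟩
  refine stmt_14_aux n m hnm hm G _ _ (fun v => rfl) i ?_ ?_ φ hφ hE
  · rintro u v ⟨hne, h | h⟩
    · exact h.1
    · exact h.1.symm
  · rintro u v ⟨hne, h | h⟩
    · exact h.2
    · have := h.2
      rwa [Sym2.eq_swap] at this
end
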